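/- arXiv:2111.12607 — 8 statements merged into one kernel-verified Lean document; each statement's English description precedes it below -/
import Mathlib

section
/- Let d ≥ 1 and let H := ℝ^{d−1} × [0, ∞) ⊆ ℝ^d be the closed upper half-space. Assume the Euclidean Faber–Krahn hypothesis with constant c > 0. Let O ⊆ H be a nonempty bounded set which is open in the subspace topology of H, and let f : H → ℝ be Lipschitz such that the closure of {f ≠ 0} is a compact subset of O. Then ∫_{int H} ‖∇f(x)‖² dx ≥ c · 2^{−2/d} · (ℒ^d(O))^{−2/d} · ∫_H f(x)² dx, where ∇f denotes the almost everywhere defined Fréchet derivative (which exists a.e. on int H by Rademacher's theorem) and ℒ^d is Lebesgue measure. -/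
open MeasureTheory Metric Bornology

/-- The Euclidean Faber–Krahn hypothesis with constant `c > 0`: for every nonempty bounded
open set `Ω ⊆ ℝ^d` and every Lipschitz function `g : ℝ^d → ℝ` with compact support contained
in `Ω`, one has `∫ ‖∇g‖² ≥ c · (ℒ^d Ω)^(-2/d) · ∫ g²`, where `∇g` is the a.e.-defined
Fréchet derivative (zero at points of non-differentiability). -/
def EuclideanFaberKrahn (d : ℕ) (c : ℝ) : Prop :=
  ∀ Ω : Set (EuclideanSpace ℝ (Fin d)), Ω.Nonempty → IsBounded Ω → IsOpen Ω →
    ∀ (g : EuclideanSpace ℝ (Fin d) → ℝ) (K : NNReal), LipschitzWith K g →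
      IsCompact (tsupport g) → tsupport g ⊆ Ω →
      c * (volume Ω).toReal ^ (-(2 : ℝ) / d) * ∫ x, (g x) ^ 2 ≤
        ∫ x, ‖fderiv ℝ g x‖ ^ 2

noncomputable def negCoordEquiv (d : ℕ) (i : Fin d) :
    EuclideanSpace ℝ (Fin d) ≃ₗᵢ[ℝ] EuclideanSpace ℝ (Fin d) where
  toFun x := WithLp.toLp 2 (Function.update x i (-(x i)))
  invFun x := WithLp.toLp 2 (Function.update x i (-(x i)))
  map_add' x y := PiLp.ext fun j => by
    rcases eq_or_ne j i with h | h
    · subst h; simp [Function.update_self, PiLp.add_apply]; ring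
    · simp [Function.update_of_ne h, PiLp.add_apply]
  map_smul' c x := PiLp.ext fun j => by
    rcases eq_or_ne j i with h | h
    · subst h; simp [Function.update_self, PiLp.smul_apply]
    · simp [Function.update_of_ne h, PiLp.smul_apply]
  left_inv x := PiLp.ext fun j => by
    rcases eq_or_ne j i with h | h
    · subst h; simp [Function.update_self]
    · simp [Function.update_of_ne h]
  right_inv x := PiLp.ext fun j => by
    rcases eq_or_ne j i with h | h
    · subst h; simp [Function.update_self]
    · simp [Function.update_of_ne h]
  norm_map' x := by
    rw [EuclideanSpace.norm_eq, EuclideanSpace.norm_eq]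
    congr 1
    refine Finset.sum_congr rfl fun j _ => ?_
    rcases eq_or_ne j i with h | h
    · subst h; simp [Function.update_self]
    · simp [Function.update_of_ne h]

theorem negCoordEquiv_apply (d : ℕ) (i : Fin d) (x : EuclideanSpace ℝ (Fin d)) :
    negCoordEquiv d i x = WithLp.toLp 2 (Function.update x i (-(x i))) := rfl

theorem negCoordEquiv_apply' (d : ℕ) (i : Fin d) (x : EuclideanSpace ℝ (Fin d)) (j : Fin d) :
    negCoordEquiv d i x j = if j = i then -(x i) else x j := by
  rw [negCoordEquiv_apply, PiLp.toLp_apply, Function.update_apply]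

theorem negCoordEquiv_apply_self (d : ℕ) (i : Fin d) (x : EuclideanSpace ℝ (Fin d)) :
    negCoordEquiv d i x i = -(x i) := by
  rw [negCoordEquiv_apply', if_pos rfl]

theorem negCoordEquiv_invol (d : ℕ) (i : Fin d) (x : EuclideanSpace ℝ (Fin d)) :
    negCoordEquiv d i (negCoordEquiv d i x) = x := PiLp.ext fun j => by
  rcases eq_or_ne j i with h | h
  · subst h; rw [negCoordEquiv_apply_self, negCoordEquiv_apply_self, neg_neg]
  · rw [negCoordEquiv_apply' _ _ _ j, if_neg h, negCoordEquiv_apply' _ _ _ j, if_neg h]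

set_option maxHeartbeats 2000000 in
/-- **Faber–Krahn inequality on the closed upper half-space** `H = ℝ^{d-1} × [0, ∞)`,
deduced from the Euclidean Faber–Krahn hypothesis by even reflection.  Here `O ⊆ H` is a
nonempty bounded relatively open subset of `H`, and `f : H → ℝ` is Lipschitz on `H` with
the closure of `{f ≠ 0} ∩ H` a compact subset of `O`.  Then
`∫_{int H} ‖∇f‖² ≥ c · 2^(-2/d) · (ℒ^d O)^(-2/d) · ∫_H f²`. -/
theorem halfSpace_faberKrahn (d : ℕ) (hd : 1 ≤ d) (c : ℝ) (hc : 0 < c)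
    (hFK : EuclideanFaberKrahn d c)
    (i : Fin d) (hi : (i : ℕ) = d - 1)
    (H : Set (EuclideanSpace ℝ (Fin d)))
    (hH : H = {x : EuclideanSpace ℝ (Fin d) | 0 ≤ x i})
    (O : Set (EuclideanSpace ℝ (Fin d))) (hOne : O.Nonempty) (hOb : IsBounded O)
    (hOH : O ⊆ H) (hOopen : ∃ V : Set (EuclideanSpace ℝ (Fin d)), IsOpen V ∧ O = V ∩ H)
    (f : EuclideanSpace ℝ (Fin d) → ℝ) (K : NNReal) (hf : LipschitzOnWith K f H)
    (hsupp : IsCompact (closure {x ∈ H | f x ≠ 0}))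
    (hsuppO : closure {x ∈ H | f x ≠ 0} ⊆ O) :
    c * 2 ^ (-(2 : ℝ) / d) * (volume O).toReal ^ (-(2 : ℝ) / d) *
        ∫ x in H, (f x) ^ 2 ≤
      ∫ x in interior H, ‖fderiv ℝ f x‖ ^ 2 := by
  classical
  have hproj_cont : Continuous fun x : EuclideanSpace ℝ (Fin d) => x i :=
    (EuclideanSpace.proj (𝕜 := ℝ) i).continuous
  have hHmeas : MeasurableSet H := by
    rw [hH]; exact (isClosed_le continuous_const hproj_cont).measurableSet
  by_cases hS0 : ({x ∈ H | f x ≠ 0} : Set (EuclideanSpace ℝ (Fin d))) = ∅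
  · have hf0 : ∀ x ∈ H, f x = 0 := by
      intro x hx
      by_contra h
      exact (Set.eq_empty_iff_forall_notMem.1 hS0 x) ⟨hx, h⟩
    have h1 : ∫ x in H, f x ^ 2 = 0 := by
      rw [setIntegral_congr_fun hHmeas (g := fun _ => (0:ℝ)) fun x hx => by
        rw [hf0 x hx]; ring]
      simp
    rw [h1, mul_zero]
    exact setIntegral_nonneg isOpen_interior.measurableSet fun x _ => sq_nonneg _
  -- main case
  set e := negCoordEquiv d i with he_def
  have he_i : ∀ x : EuclideanSpace ℝ (Fin d), e x i = -(x i) := fun x =>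
    negCoordEquiv_apply_self d i x
  have he_ne : ∀ (x : EuclideanSpace ℝ (Fin d)) (j : Fin d), j ≠ i → e x j = x j := by
    intro x j hj; rw [he_def, negCoordEquiv_apply', if_neg hj]
  have he_inv : ∀ x, e (e x) = x := negCoordEquiv_invol d i
  set P : Set (EuclideanSpace ℝ (Fin d)) := {x | 0 < x i} with hP_def
  set Z : Set (EuclideanSpace ℝ (Fin d)) := {x | x i = 0} with hZ_def
  set N : Set (EuclideanSpace ℝ (Fin d)) := {x | x i < 0} with hN_def
  have hPopen : IsOpen P := isOpen_lt continuous_const hproj_cont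
  have hPmeas : MeasurableSet P := hPopen.measurableSet
  have hPsubH : P ⊆ H := by rw [hH]; exact fun x hx => show (0:ℝ) ≤ x i from le_of_lt hx
  have hNP : ⇑e ⁻¹' P = N := by
    ext x
    simp only [Set.mem_preimage, hP_def, hN_def, Set.mem_setOf_eq, he_i, neg_pos]
  -- hyperplane is null
  have hZ : volume Z = 0 := by
    have hmp := EuclideanSpace.volume_preserving_symm_measurableEquiv_toLp (Fin d)
    have h2 : volume {y : Fin d → ℝ | y i = 0} = 0 := by
      rw [volume_pi]; exact MeasureTheory.Measure.pi_hyperplane _ i 0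
    have h1 : volume ((MeasurableEquiv.toLp 2 (Fin d → ℝ)).symm ⁻¹'
        {y : Fin d → ℝ | y i = 0}) = volume {y : Fin d → ℝ | y i = 0} := by
      rw [← hmp.map_eq]
      exact (MeasurableEquiv.map_apply _ _).symm
    have h3 : Z = (MeasurableEquiv.toLp 2 (Fin d → ℝ)).symm ⁻¹'
        {y : Fin d → ℝ | y i = 0} := rfl
    rw [h3, h1, h2]
  -- interior of H
  have hintH : interior H = P := by
    have hsurj : Function.Surjective fun x : EuclideanSpace ℝ (Fin d) => x i := by
      intro y
      refine ⟨EuclideanSpace.single i y, ?_⟩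
      simp [EuclideanSpace.single_apply]
    have hopenmap : IsOpenMap fun x : EuclideanSpace ℝ (Fin d) => x i :=
      (EuclideanSpace.proj (𝕜 := ℝ) i).isOpenMap hsurj
    have h0 : H = (fun x : EuclideanSpace ℝ (Fin d) => x i) ⁻¹' Set.Ici 0 := by
      rw [hH]; rfl
    rw [h0, ← hopenmap.preimage_interior_eq_interior_preimage hproj_cont, interior_Ici]
    rfl
  -- even extension
  set φ : EuclideanSpace ℝ (Fin d) → EuclideanSpace ℝ (Fin d) :=
    fun x => WithLp.toLp 2 (Function.update x i |x i|) with hφ_def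
  set g : EuclideanSpace ℝ (Fin d) → ℝ := fun x => f (φ x) with hg_def
  have hφ_i : ∀ x, φ x i = |x i| := fun x => Function.update_self i _ x
  have hφ_ne : ∀ (x) (j), j ≠ i → φ x j = x j := fun x j hj =>
    Function.update_of_ne hj _ x
  have hφ_mem : ∀ x, φ x ∈ H := by
    intro x; rw [hH]
    show (0:ℝ) ≤ φ x i
    rw [hφ_i]; exact abs_nonneg _
  have hφ_fix : ∀ x ∈ H, φ x = x := by
    intro x hx
    rw [hH] at hx
    rw [hφ_def]
    simp only
    rw [abs_of_nonneg (show 0 ≤ x i from hx)]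
    rw [Function.update_eq_self]
  have hgH : ∀ x ∈ H, g x = f x := fun x hx => by rw [hg_def]; simp only; rw [hφ_fix x hx]
  have hφe : ∀ x, φ (e x) = φ x := by
    intro x
    ext j
    rcases eq_or_ne j i with h | h
    · subst h; rw [hφ_i, hφ_i, he_i, abs_neg]
    · rw [hφ_ne _ _ h, hφ_ne _ _ h, he_ne _ _ h]
  have hge : ∀ x, g (e x) = g x := fun x => by rw [hg_def]; simp only [hφe x]
  -- Lipschitz
  have hφ_lip : LipschitzWith 1 φ := by
    apply LipschitzWith.of_dist_le_mul
    intro x y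
    simp only [NNReal.coe_one, one_mul]
    rw [EuclideanSpace.dist_eq, EuclideanSpace.dist_eq]
    apply Real.sqrt_le_sqrt
    apply Finset.sum_le_sum
    intro j _
    rcases eq_or_ne j i with h | h
    · subst h
      rw [hφ_i, hφ_i, Real.dist_eq, Real.dist_eq]
      exact pow_le_pow_left₀ (abs_nonneg _)
        ((abs_abs_sub_abs_le_abs_sub _ _)) 2
    · rw [hφ_ne _ _ h, hφ_ne _ _ h]
  have hg_lip : LipschitzWith K g := by
    have h1 := hf.comp (hφ_lip.lipschitzOnWith (s := Set.univ))
      (fun x _ => hφ_mem x)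
    rw [mul_one] at h1
    exact lipschitzOnWith_univ.mp h1
  have hg_cont : Continuous g := hg_lip.continuous
  -- support
  set S : Set (EuclideanSpace ℝ (Fin d)) := closure {x ∈ H | f x ≠ 0} with hS_def
  have hSne : S.Nonempty := by
    obtain ⟨s, hs⟩ := Set.nonempty_iff_ne_empty.2 hS0
    exact ⟨s, subset_closure hs⟩
  set T : Set (EuclideanSpace ℝ (Fin d)) := S ∪ ⇑e '' S with hT_def
  have hT_cpt : IsCompact T := hsupp.union (hsupp.image e.continuous)
  have hsupps : Function.support g ⊆ T := by
    intro x hx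
    have hφx : φ x ∈ S := subset_closure ⟨hφ_mem x, hx⟩
    rcases le_or_gt 0 (x i) with h | h
    · left
      have : φ x = x := hφ_fix x (by rw [hH]; exact h)
      rwa [this] at hφx
    · right
      refine ⟨φ x, hφx, ?_⟩
      ext j
      rcases eq_or_ne j i with hj | hj
      · subst hj
        rw [he_i, hφ_i, abs_of_neg h, neg_neg]
      · rw [he_ne _ _ hj, hφ_ne _ _ hj]
  have htsupp : tsupport g ⊆ T := closure_minimal hsupps hT_cpt.isClosed
  have hts_cpt : IsCompact (tsupport g) :=
    hT_cpt.of_isClosed_subset isClosed_closure htsupp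
  have hgcs : HasCompactSupport g := hts_cpt
  -- the doubled open set Ω
  obtain ⟨V, hVopen, hOV⟩ := hOopen
  obtain ⟨r, hr⟩ := hT_cpt.isBounded.subset_ball (0 : EuclideanSpace ℝ (Fin d))
  set Ω : Set (EuclideanSpace ℝ (Fin d)) :=
    ball (0 : EuclideanSpace ℝ (Fin d)) r ∩
      (((V ∩ P) ∪ ⇑e ⁻¹' (V ∩ P)) ∪ (V ∩ ⇑e ⁻¹' V)) with hΩ_def
  have hΩopen : IsOpen Ω :=
    isOpen_ball.inter (((hVopen.inter hPopen).union
      ((hVopen.inter hPopen).preimage e.continuous)).union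
      (hVopen.inter (hVopen.preimage e.continuous)))
  have hΩb : IsBounded Ω := isBounded_ball.subset Set.inter_subset_left
  have hmemO : ∀ x ∈ S, x ∈ V ∧ 0 ≤ x i := by
    intro s hs
    have : s ∈ V ∩ H := hOV ▸ hsuppO hs
    refine ⟨this.1, ?_⟩
    have := this.2; rw [hH] at this; exact this
  have heq_self : ∀ x : EuclideanSpace ℝ (Fin d), x i = 0 → e x = x := by
    intro x hx
    ext j
    rcases eq_or_ne j i with hj | hj
    · subst hj; rw [he_i, hx, neg_zero]
    · exact he_ne _ _ hj
  have hSsub : S ⊆ Ω := by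
    intro s hs
    obtain ⟨hsV, hsi⟩ := hmemO s hs
    refine ⟨hr (Or.inl hs), ?_⟩
    rcases hsi.lt_or_eq with h | h
    · exact Or.inl (Or.inl ⟨hsV, h⟩)
    · refine Or.inr ⟨hsV, ?_⟩
      rw [Set.mem_preimage, heq_self s h.symm]
      exact hsV
  have heSsub : ∀ s ∈ S, e s ∈ Ω := by
    intro s hs
    obtain ⟨hsV, hsi⟩ := hmemO s hs
    refine ⟨hr (Or.inr (Set.mem_image_of_mem _ hs)), ?_⟩
    rcases hsi.lt_or_eq with h | h
    · refine Or.inl (Or.inr ?_)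
      rw [Set.mem_preimage, he_inv s]
      exact ⟨hsV, h⟩
    · rw [heq_self s h.symm]
      refine Or.inr ⟨hsV, ?_⟩
      rw [Set.mem_preimage, heq_self s h.symm]
      exact hsV
  have hTsub : T ⊆ Ω := by
    rintro x (hx | ⟨s, hs, rfl⟩)
    · exact hSsub hx
    · exact heSsub s hs
  have hΩne : Ω.Nonempty := ⟨hSne.choose, hSsub hSne.choose_spec⟩
  -- apply the hypothesis
  have hFKapp := hFK Ω hΩne hΩb hΩopen g K hg_lip hts_cpt (htsupp.trans hTsub)
  -- preimage volumes under e
  have hvol_pre : ∀ s : Set (EuclideanSpace ℝ (Fin d)), volume (⇑e ⁻¹' s) = volume s := by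
    intro s
    have h1 : (volume : Measure (EuclideanSpace ℝ (Fin d))).map ⇑e s = volume (⇑e ⁻¹' s) :=
      MeasurableEquiv.map_apply (e.toHomeomorph.toMeasurableEquiv) s
    rw [e.measurePreserving.map_eq] at h1
    exact h1.symm
  -- volume comparison
  have hΩP : Ω ∩ P ⊆ O := by
    rintro x ⟨⟨-, hx2⟩, hxP⟩
    rcases hx2 with (⟨hV, -⟩ | hB) | ⟨hV, -⟩
    · rw [hOV]; exact ⟨hV, hPsubH hxP⟩
    · exfalso
      have h1 : (0:ℝ) < e x i := hB.2
      rw [he_i] at h1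
      have h2 : (0:ℝ) < x i := hxP
      linarith
    · rw [hOV]; exact ⟨hV, hPsubH hxP⟩
  have hΩN : Ω ∩ N ⊆ ⇑e ⁻¹' O := by
    rintro x ⟨⟨-, hx2⟩, hxN⟩
    have hxN' : x i < 0 := hxN
    rcases hx2 with (⟨-, hP⟩ | hB) | ⟨-, hV'⟩
    · exfalso
      have h2 : (0:ℝ) < x i := hP
      linarith
    · rw [Set.mem_preimage, hOV]
      exact ⟨hB.1, hPsubH hB.2⟩
    · rw [Set.mem_preimage, hOV]
      refine ⟨hV', ?_⟩
      rw [hH]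
      show (0:ℝ) ≤ e x i
      rw [he_i]; linarith
  have hvol_le : volume Ω ≤ 2 * volume O := by
    have hsub : Ω ⊆ (Ω ∩ P) ∪ ((Ω ∩ N) ∪ Z) := by
      intro x hx
      rcases lt_trichotomy (x i) 0 with h | h | h
      · exact Or.inr (Or.inl ⟨hx, h⟩)
      · exact Or.inr (Or.inr h)
      · exact Or.inl ⟨hx, h⟩
    calc volume Ω ≤ volume ((Ω ∩ P) ∪ ((Ω ∩ N) ∪ Z)) := measure_mono hsub
      _ ≤ volume (Ω ∩ P) + volume ((Ω ∩ N) ∪ Z) := measure_union_le _ _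
      _ ≤ volume (Ω ∩ P) + (volume (Ω ∩ N) + volume Z) :=
          add_le_add_right (measure_union_le _ _) _
      _ ≤ volume O + (volume (⇑e ⁻¹' O) + 0) :=
          add_le_add (measure_mono hΩP) (add_le_add (measure_mono hΩN) hZ.le)
      _ = 2 * volume O := by rw [hvol_pre, add_zero, two_mul]
  -- a.e. set equalities
  have hH_ae : H =ᵐ[volume] P := by
    rw [MeasureTheory.ae_eq_set]
    constructor
    · apply measure_mono_null _ hZ
      intro x hx
      have h1 : 0 ≤ x i := by have := hx.1; rwa [hH] at this
      have h2 : ¬(0 < x i) := hx.2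
      exact le_antisymm (not_lt.1 h2) h1
    · have : P \ H = ∅ := Set.diff_eq_empty.2 hPsubH
      rw [this]; exact measure_empty
  have hPc_ae : (Pᶜ : Set (EuclideanSpace ℝ (Fin d))) =ᵐ[volume] N := by
    rw [MeasureTheory.ae_eq_set]
    constructor
    · apply measure_mono_null _ hZ
      intro x hx
      have h1 : ¬(0 < x i) := hx.1
      have h2 : ¬(x i < 0) := hx.2
      exact le_antisymm (not_lt.1 h1) (not_lt.1 h2)
    · have hNsub : N ⊆ Pᶜ := fun x hx =>
        show ¬(0:ℝ) < x i from not_lt.2 (le_of_lt (show x i < (0:ℝ) from hx))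
      have : N \ Pᶜ = ∅ := Set.diff_eq_empty.2 hNsub
      rw [this]; exact measure_empty
  -- splitting lemma
  have key : ∀ F : EuclideanSpace ℝ (Fin d) → ℝ, Integrable F volume →
      (∀ x, F (e x) = F x) → ∫ x, F x = 2 * ∫ x in P, F x := by
    intro F hFi hFe
    have h1 : ∫ x in (Pᶜ : Set (EuclideanSpace ℝ (Fin d))), F x = ∫ x in N, F x :=
      setIntegral_congr_set hPc_ae
    have h2 : ∫ x in N, F x = ∫ x in P, F x := by
      rw [← hNP]
      have h3 := e.measurePreserving.setIntegral_preimage_emb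
        (e.toHomeomorph.toMeasurableEquiv.measurableEmbedding) F P
      rw [← h3]
      apply setIntegral_congr_fun (hPopen.preimage e.continuous).measurableSet
      intro x _
      exact (hFe x).symm
    have h4 := integral_add_compl hPmeas hFi
    rw [h1, h2] at h4
    linarith
  -- integrability
  have hg2_int : Integrable (fun x => g x ^ 2) volume := by
    apply Continuous.integrable_of_hasCompactSupport (hg_cont.pow 2)
    exact hgcs.comp_left (g := fun t : ℝ => t ^ 2) (by norm_num)
  have hdmeas : AEStronglyMeasurable (fun x => ‖fderiv ℝ g x‖ ^ 2) volume :=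
    (((measurable_fderiv ℝ g).norm).pow_const 2).aestronglyMeasurable
  have hdsupp : Function.support (fun x => ‖fderiv ℝ g x‖ ^ 2) ⊆ tsupport g := by
    intro x hx
    have h0 : fderiv ℝ g x ≠ 0 := by
      intro h
      apply hx
      simp [h]
    exact support_fderiv_subset ℝ h0
  have hdom : Integrable ((tsupport g).indicator fun _ => (K : ℝ) ^ 2) volume := by
    rw [integrable_indicator_iff (isClosed_tsupport g).measurableSet]
    exact integrableOn_const hts_cpt.measure_lt_top.ne
  have hgd_int : Integrable (fun x => ‖fderiv ℝ g x‖ ^ 2) volume := by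
    apply Integrable.mono' hdom hdmeas
    apply ae_of_all
    intro x
    rw [Real.norm_eq_abs, abs_of_nonneg (sq_nonneg _)]
    by_cases hx : x ∈ tsupport g
    · rw [Set.indicator_of_mem hx]
      exact pow_le_pow_left₀ (norm_nonneg _) (norm_fderiv_le_of_lipschitz ℝ hg_lip) 2
    · rw [Set.indicator_of_notMem hx]
      have h0 : fderiv ℝ g x = 0 := by
        by_contra h
        exact hx (support_fderiv_subset ℝ h)
      simp [h0]
  -- evenness of the derivative
  have hnorm_comp : ∀ A : EuclideanSpace ℝ (Fin d) →L[ℝ] ℝ,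
      ‖A.comp (e.toContinuousLinearEquiv : EuclideanSpace ℝ (Fin d) →L[ℝ]
        EuclideanSpace ℝ (Fin d))‖ = ‖A‖ := by
    intro A
    apply le_antisymm
    · apply ContinuousLinearMap.opNorm_le_bound _ (norm_nonneg A)
      intro x
      rw [ContinuousLinearMap.comp_apply]
      calc ‖A (e.toContinuousLinearEquiv x)‖ ≤ ‖A‖ * ‖e.toContinuousLinearEquiv x‖ :=
            A.le_opNorm _
        _ = ‖A‖ * ‖x‖ := by rw [show (e.toContinuousLinearEquiv x : EuclideanSpace ℝ (Fin d))
              = e x from rfl, e.norm_map]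
    · apply ContinuousLinearMap.opNorm_le_bound _ (norm_nonneg _)
      intro y
      have h1 : A y = (A.comp (e.toContinuousLinearEquiv : EuclideanSpace ℝ (Fin d) →L[ℝ]
          EuclideanSpace ℝ (Fin d))) (e.symm y) := by
        rw [ContinuousLinearMap.comp_apply]
        congr 1
        exact (e.apply_symm_apply y).symm
      rw [h1]
      calc ‖_‖ ≤ ‖A.comp _‖ * ‖e.symm y‖ := ContinuousLinearMap.le_opNorm _ _
        _ = _ * ‖y‖ := by rw [e.symm.norm_map]
  have hcomp : ∀ x, fderiv ℝ g x =
      (fderiv ℝ g (e x)).comp (e.toContinuousLinearEquiv : EuclideanSpace ℝ (Fin d) →L[ℝ]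
        EuclideanSpace ℝ (Fin d)) := by
    intro x
    have h0 : g ∘ ⇑e.toContinuousLinearEquiv = g := funext fun y => hge y
    conv_lhs => rw [← h0]
    exact e.toContinuousLinearEquiv.comp_right_fderiv
  have hnorm_e : ∀ x, ‖fderiv ℝ g (e x)‖ = ‖fderiv ℝ g x‖ := by
    intro x
    rw [hcomp x, hnorm_comp]
  -- integral identities
  have hg2_eq : ∫ x, g x ^ 2 = 2 * ∫ x in P, g x ^ 2 :=
    key _ hg2_int fun x => by rw [hge]
  have hgd_eq : ∫ x, ‖fderiv ℝ g x‖ ^ 2 = 2 * ∫ x in P, ‖fderiv ℝ g x‖ ^ 2 :=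
    key _ hgd_int fun x => by rw [hnorm_e]
  have hPH2 : ∫ x in H, f x ^ 2 = ∫ x in P, g x ^ 2 := by
    rw [setIntegral_congr_set hH_ae]
    apply setIntegral_congr_fun hPmeas
    intro x hx
    show f x ^ 2 = g x ^ 2
    rw [hgH x (hPsubH hx)]
  have hPint : ∫ x in interior H, ‖fderiv ℝ f x‖ ^ 2 = ∫ x in P, ‖fderiv ℝ g x‖ ^ 2 := by
    rw [hintH]
    apply setIntegral_congr_fun hPmeas
    intro x hx
    have hev : g =ᶠ[nhds x] f :=
      Filter.eventually_of_mem (hPopen.mem_nhds hx) fun y hy => hgH y (hPsubH hy)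
    show ‖fderiv ℝ f x‖ ^ 2 = ‖fderiv ℝ g x‖ ^ 2
    rw [hev.symm.fderiv_eq]
  -- final arithmetic
  have hp : -(2 : ℝ) / d ≤ 0 :=
    div_nonpos_iff.2 (Or.inr ⟨by norm_num, Nat.cast_nonneg d⟩)
  have hvΩfin : volume Ω ≠ ⊤ := hΩb.measure_lt_top.ne
  have hvΩpos : 0 < (volume Ω).toReal :=
    ENNReal.toReal_pos (hΩopen.measure_pos volume hΩne).ne' hvΩfin
  have hvOfin : volume O ≠ ⊤ := hOb.measure_lt_top.ne
  have hvol_le' : (volume Ω).toReal ≤ 2 * (volume O).toReal := by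
    have h1 := ENNReal.toReal_le_toReal hvΩfin
      (ENNReal.mul_ne_top (by norm_num) hvOfin) |>.2 hvol_le
    rwa [ENNReal.toReal_mul, ENNReal.toReal_ofNat] at h1
  have hrpow : (2 : ℝ) ^ (-(2 : ℝ) / d) * (volume O).toReal ^ (-(2 : ℝ) / d) ≤
      (volume Ω).toReal ^ (-(2 : ℝ) / d) := by
    rw [← Real.mul_rpow (by norm_num) ENNReal.toReal_nonneg]
    exact Real.rpow_le_rpow_of_nonpos hvΩpos hvol_le' hp
  have hA : (0 : ℝ) ≤ ∫ x in H, f x ^ 2 :=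
    setIntegral_nonneg hHmeas fun x _ => sq_nonneg _
  have hFK2 : c * (volume Ω).toReal ^ (-(2 : ℝ) / d) * (2 * ∫ x in H, f x ^ 2) ≤
      2 * ∫ x in interior H, ‖fderiv ℝ f x‖ ^ 2 := by
    calc c * (volume Ω).toReal ^ (-(2 : ℝ) / d) * (2 * ∫ x in H, f x ^ 2)
        = c * (volume Ω).toReal ^ (-(2 : ℝ) / d) * ∫ x, g x ^ 2 := by
          rw [hg2_eq, hPH2]
      _ ≤ ∫ x, ‖fderiv ℝ g x‖ ^ 2 := hFKapp
      _ = 2 * ∫ x in P, ‖fderiv ℝ g x‖ ^ 2 := hgd_eq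
      _ = 2 * ∫ x in interior H, ‖fderiv ℝ f x‖ ^ 2 := by rw [hPint]
  have hcoef : c * 2 ^ (-(2 : ℝ) / d) * (volume O).toReal ^ (-(2 : ℝ) / d) ≤
      c * (volume Ω).toReal ^ (-(2 : ℝ) / d) := by
    rw [mul_assoc]
    exact mul_le_mul_of_nonneg_left hrpow hc.le
  have hmain : c * 2 ^ (-(2 : ℝ) / d) * (volume O).toReal ^ (-(2 : ℝ) / d) *
      ∫ x in H, f x ^ 2 ≤ c * (volume Ω).toReal ^ (-(2 : ℝ) / d) * ∫ x in H, f x ^ 2 :=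
    mul_le_mul_of_nonneg_right hcoef hA
  have h5 : c * (volume Ω).toReal ^ (-(2 : ℝ) / d) * (2 * ∫ x in H, f x ^ 2) =
      2 * (c * (volume Ω).toReal ^ (-(2 : ℝ) / d) * ∫ x in H, f x ^ 2) := by ring
  rw [h5] at hFK2
  linarith
end

section
/- Let d ≥ 1 and H := ℝ^{d−1} × [0, ∞). Let g : H → ℝ be Lipschitz with Lipschitz constant K and compact support, and define its even reflection g_r : ℝ^d → ℝ by g_r(x′, t) := g(x′, |t|). Then: (i) g_r is Lipschitz with constant K and has compact support; (ii) ∫_{ℝ^d} g_r(x)² dx = 2 ∫_H g(x)² dx; (iii) ∫_{ℝ^d} ‖∇g_r(x)‖² dx = 2 ∫_{int H} ‖∇g(x)‖² dx, where ∇ denotes the almost everywhere defined Fréchet derivative (Rademacher's theorem) and integrals are with respect to Lebesgue measure. -/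
/-!
The reflection is `g ∘ φ` for the fold `φ(x', t) = (x', |t|)`, which is 1-Lipschitz and maps into
`H`; this gives (i). Both integrands in (ii) and (iii) are invariant under the reflection
`(x', t) ↦ (x', -t)`, a linear isometry and hence Lebesgue-measure preserving (for (iii) because
`‖D(f ∘ e)(x)‖ = ‖Df(ex)‖` for a linear isometry `e`), so each integral is twice the integral over
`int H`, the boundary hyperplane being null. On `int H` the reflection agrees with `g` near each
point, hence so do the derivatives.
-/

open MeasureTheory Metric

namespace EuclideanSpace

variable {ι : Type*} [DecidableEq ι] (i : ι)

def absCoord (x : EuclideanSpace ℝ ι) : EuclideanSpace ℝ ι :=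
  WithLp.toLp 2 (Function.update (WithLp.ofLp x) i |x i|)

variable {i}

@[simp]
lemma absCoord_apply_self (x : EuclideanSpace ℝ ι) : absCoord i x i = |x i| := by
  simp [absCoord]

@[simp]
lemma absCoord_apply_of_ne {j : ι} (hj : j ≠ i) (x : EuclideanSpace ℝ ι) :
    absCoord i x j = x j := by
  simp [absCoord, hj]

lemma absCoord_of_nonneg {x : EuclideanSpace ℝ ι} (hx : 0 ≤ x i) : absCoord i x = x := by
  ext j
  rcases eq_or_ne j i with rfl | hj
  · simp [abs_of_nonneg hx]
  · simp [hj]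

variable [Fintype ι]

variable (i) in
noncomputable def negCoord : EuclideanSpace ℝ ι ≃ₗᵢ[ℝ] EuclideanSpace ℝ ι :=
  LinearIsometryEquiv.piLpCongrRight 2
    (fun j => if j = i then LinearIsometryEquiv.neg ℝ else LinearIsometryEquiv.refl ℝ ℝ)

@[simp]
lemma negCoord_apply_self (x : EuclideanSpace ℝ ι) : negCoord i x i = -x i := by
  simp [negCoord, LinearIsometryEquiv.piLpCongrRight_apply]

@[simp]
lemma negCoord_apply_of_ne {j : ι} (hj : j ≠ i) (x : EuclideanSpace ℝ ι) :
    negCoord i x j = x j := by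
  simp [negCoord, LinearIsometryEquiv.piLpCongrRight_apply, hj]

@[simp]
lemma absCoord_negCoord (x : EuclideanSpace ℝ ι) : absCoord i (negCoord i x) = absCoord i x := by
  ext j
  rcases eq_or_ne j i with rfl | hj
  · simp
  · simp [hj]

lemma negCoord_absCoord_of_neg {x : EuclideanSpace ℝ ι} (hx : x i < 0) :
    negCoord i (absCoord i x) = x := by
  ext j
  rcases eq_or_ne j i with rfl | hj
  · simp [abs_of_neg hx]
  · simp [hj]

lemma lipschitzWith_absCoord : LipschitzWith 1 (absCoord i : EuclideanSpace ℝ ι → _) := by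
  refine LipschitzWith.of_dist_le_mul fun x y => ?_
  rw [NNReal.coe_one, one_mul, EuclideanSpace.dist_eq, EuclideanSpace.dist_eq]
  refine Real.sqrt_le_sqrt (Finset.sum_le_sum fun j _ => ?_)
  rcases eq_or_ne j i with rfl | hj
  · simp only [absCoord_apply_self, Real.dist_eq]
    exact pow_le_pow_left₀ (abs_nonneg _) (abs_abs_sub_abs_le_abs_sub _ _) 2
  · simp [hj]

lemma _root_.LipschitzOnWith.comp_absCoord {g : EuclideanSpace ℝ ι → ℝ} {K : NNReal}
    (hg : LipschitzOnWith K g {x | 0 ≤ x i}) : LipschitzWith K (g ∘ absCoord i) := by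
  simpa using hg.comp (lipschitzWith_absCoord.lipschitzOnWith (s := Set.univ))
    fun x _ => by simp

lemma hasCompactSupport_comp_absCoord {g : EuclideanSpace ℝ ι → ℝ}
    (hg : IsCompact (closure {x | 0 ≤ x i ∧ g x ≠ 0})) : HasCompactSupport (g ∘ absCoord i) := by
  refine HasCompactSupport.of_support_subset_isCompact (hg.union (hg.image (negCoord i).continuous))
    fun x hx => ?_
  have hmem : absCoord i x ∈ closure {x | 0 ≤ x i ∧ g x ≠ 0} :=
    subset_closure ⟨by simp, hx⟩
  rcases le_or_gt 0 (x i) with hx | hx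
  · exact .inl (absCoord_of_nonneg hx ▸ hmem)
  · exact .inr ⟨_, hmem, negCoord_absCoord_of_neg hx⟩

variable (i) in
lemma volume_setOf_coord_eq_zero : volume {x : EuclideanSpace ℝ ι | x i = 0} = 0 := by
  refine Measure.addHaar_submodule volume (LinearMap.ker (EuclideanSpace.projₗ i)) fun htop => ?_
  have hsingle : EuclideanSpace.single i (1 : ℝ) ∈ LinearMap.ker (EuclideanSpace.projₗ i) :=
    htop ▸ Submodule.mem_top
  simp at hsingle

variable (i) in
lemma setOf_coord_pos_ae_eq_nonneg :
    {x : EuclideanSpace ℝ ι | 0 < x i} =ᵐ[volume] {x | 0 ≤ x i} := by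
  filter_upwards [measure_eq_zero_iff_ae_notMem.1 (volume_setOf_coord_eq_zero i)] with x hx
  change (0 < x i) = (0 ≤ x i)
  exact propext (lt_iff_le_and_ne.trans (and_iff_left (Ne.symm hx)))

variable (i) in
lemma interior_setOf_coord_nonneg :
    interior {x : EuclideanSpace ℝ ι | 0 ≤ x i} = {x | 0 < x i} := by
  have hopen : IsOpenMap (EuclideanSpace.proj i : EuclideanSpace ℝ ι →L[ℝ] ℝ) :=
    (EuclideanSpace.proj (𝕜 := ℝ) i).isOpenMap fun t => ⟨EuclideanSpace.single i t, by simp⟩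
  simpa [Set.preimage, interior_Ici] using
    (hopen.preimage_interior_eq_interior_preimage (EuclideanSpace.proj i).continuous
      (Set.Ici 0)).symm

lemma integral_eq_two_smul_setIntegral_of_comp_negCoord {E : Type*} [NormedAddCommGroup E]
    [NormedSpace ℝ E] {F : EuclideanSpace ℝ ι → E} (hF : Integrable F)
    (hFe : ∀ x, F (negCoord i x) = F x) :
    ∫ x, F x = (2 : ℝ) • ∫ x in {x | 0 < x i}, F x := by
  have hH : MeasurableSet {x : EuclideanSpace ℝ ι | 0 ≤ x i} :=
    measurableSet_le measurable_const (by fun_prop)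
  have hneg : ∫ x in {x | 0 ≤ x i}ᶜ, F x = ∫ x in {x | 0 < x i}, F x := by
    have hpre : negCoord i ⁻¹' {x | 0 < x i} = {x | 0 ≤ x i}ᶜ := by ext x; simp
    calc ∫ x in {x | 0 ≤ x i}ᶜ, F x = ∫ x in negCoord i ⁻¹' {x | 0 < x i}, F (negCoord i x) := by
          rw [hpre]; simp only [hFe]
      _ = ∫ x in {x | 0 < x i}, F x := (negCoord i).measurePreserving.setIntegral_preimage_emb
          (negCoord i).toHomeomorph.measurableEmbedding F _
  rw [← integral_add_compl hH hF, hneg, setIntegral_congr_set (setOf_coord_pos_ae_eq_nonneg i).symm,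
    two_smul]

end EuclideanSpace

open EuclideanSpace

lemma norm_fderiv_comp_linearIsometryEquiv {E F : Type*} [NormedAddCommGroup E] [NormedSpace ℝ E]
    [NormedAddCommGroup F] [NormedSpace ℝ F] (f : E → F) (e : E ≃ₗᵢ[ℝ] E) (x : E) :
    ‖fderiv ℝ (f ∘ e) x‖ = ‖fderiv ℝ f (e x)‖ := by
  rw [show (f ∘ e) = f ∘ e.toContinuousLinearEquiv from rfl,
    ContinuousLinearEquiv.comp_right_fderiv]
  exact (fderiv ℝ f (e x)).opNorm_comp_linearIsometryEquiv e

lemma LipschitzWith.integrable_norm_fderiv_sq {E F : Type*} [NormedAddCommGroup E]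
    [NormedSpace ℝ E] [MeasurableSpace E] [OpensMeasurableSpace E] [NormedAddCommGroup F]
    [NormedSpace ℝ F] [CompleteSpace F] {μ : Measure E} [IsFiniteMeasureOnCompacts μ]
    {f : E → F} {K : NNReal} (hf : LipschitzWith K f) (hcs : HasCompactSupport f) :
    Integrable (fun x => ‖fderiv ℝ f x‖ ^ 2) μ := by
  refine IntegrableOn.integrable_of_forall_notMem_eq_zero (s := tsupport f) ?_ fun x hx => ?_
  · refine Measure.integrableOn_of_bounded (M := (K : ℝ) ^ 2) hcs.measure_lt_top.ne
      ((measurable_fderiv ℝ f).norm.pow_const 2).aestronglyMeasurable (.of_forall fun x => ?_)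
    rw [Real.norm_of_nonneg (by positivity)]
    exact pow_le_pow_left₀ (norm_nonneg _) (norm_fderiv_le_of_lipschitz ℝ hf) 2
  · simp [Function.notMem_support.1 fun h => hx (support_fderiv_subset ℝ h)]

theorem even_reflection_lipschitz_and_integrals_general (d : ℕ)
    (i : Fin d)
    (H : Set (EuclideanSpace ℝ (Fin d)))
    (hH : H = {x : EuclideanSpace ℝ (Fin d) | 0 ≤ x i})
    (g : EuclideanSpace ℝ (Fin d) → ℝ) (K : NNReal) (hg : LipschitzOnWith K g H)
    (hsupp : IsCompact (closure {x ∈ H | g x ≠ 0}))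
    (g_r : EuclideanSpace ℝ (Fin d) → ℝ)
    (hg_r : g_r = fun x => g (WithLp.toLp 2 (Function.update (WithLp.ofLp x) i |x i|))) :
    (LipschitzWith K g_r ∧ HasCompactSupport g_r) ∧
      (∫ x, (g_r x) ^ 2) = 2 * ∫ x in H, (g x) ^ 2 ∧
      (∫ x, ‖fderiv ℝ g_r x‖ ^ 2) = 2 * ∫ x in interior H, ‖fderiv ℝ g x‖ ^ 2 := by
  replace hg_r : g_r = g ∘ absCoord i := hg_r
  subst hH hg_r
  have hlip : LipschitzWith K (g ∘ absCoord i) := hg.comp_absCoord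
  have hcs : HasCompactSupport (g ∘ absCoord i) := hasCompactSupport_comp_absCoord hsupp
  have heven : (g ∘ absCoord i) ∘ negCoord i = g ∘ absCoord i := by
    funext x; simp
  have hagree : Set.EqOn (g ∘ absCoord i) g {x | 0 ≤ x i} := fun x hx => by
    simp [absCoord_of_nonneg (i := i) hx]
  refine ⟨⟨hlip, hcs⟩, ?_, ?_⟩
  · have hint : Integrable fun x => (g ∘ absCoord i) x ^ 2 :=
      (hlip.continuous.pow 2).integrable_of_hasCompactSupport (hcs.comp_left (zero_pow two_ne_zero))
    rw [integral_eq_two_smul_setIntegral_of_comp_negCoord hint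
      fun x => congrArg (· ^ 2) (congrFun heven x),
      setIntegral_congr_set (setOf_coord_pos_ae_eq_nonneg i), smul_eq_mul,
      setIntegral_congr_fun (measurableSet_le measurable_const (by fun_prop)) fun x hx => by
        rw [hagree hx]]
  · rw [integral_eq_two_smul_setIntegral_of_comp_negCoord (i := i)
      (F := fun x => ‖fderiv ℝ (g ∘ absCoord i) x‖ ^ 2) (hlip.integrable_norm_fderiv_sq hcs)
      fun x => by rw [← norm_fderiv_comp_linearIsometryEquiv, heven],
      ← interior_setOf_coord_nonneg i, smul_eq_mul,
      setIntegral_congr_fun isOpen_interior.measurableSet fun x hx => by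
        rw [(hagree.eventuallyEq_of_mem (mem_interior_iff_mem_nhds.1 hx)).fderiv_eq]]

/-- **Even reflection across the boundary hyperplane of the upper half-space.**
Let `H = ℝ^{d-1} × [0,∞)` (the set where the last coordinate is nonnegative), let
`g : H → ℝ` be `K`-Lipschitz with compact support, and let `g_r` be its even reflection,
`g_r(x', t) = g(x', |t|)`.  Then (i) `g_r` is `K`-Lipschitz with compact support,
(ii) `∫_{ℝ^d} g_r² = 2 ∫_H g²`, and (iii) `∫_{ℝ^d} ‖∇g_r‖² = 2 ∫_{int H} ‖∇g‖²`,
where `∇` is the a.e.-defined Fréchet derivative. -/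
theorem even_reflection_lipschitz_and_integrals (d : ℕ) (hd : 1 ≤ d)
    (i : Fin d) (hi : (i : ℕ) = d - 1)
    (H : Set (EuclideanSpace ℝ (Fin d)))
    (hH : H = {x : EuclideanSpace ℝ (Fin d) | 0 ≤ x i})
    (g : EuclideanSpace ℝ (Fin d) → ℝ) (K : NNReal) (hg : LipschitzOnWith K g H)
    (hsupp : IsCompact (closure {x ∈ H | g x ≠ 0}))
    (g_r : EuclideanSpace ℝ (Fin d) → ℝ)
    (hg_r : g_r = fun x => g (WithLp.toLp 2 (Function.update (WithLp.ofLp x) i |x i|))) :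
    (LipschitzWith K g_r ∧ HasCompactSupport g_r) ∧
      (∫ x, (g_r x) ^ 2) = 2 * ∫ x in H, (g x) ^ 2 ∧
      (∫ x, ‖fderiv ℝ g_r x‖ ^ 2) = 2 * ∫ x in interior H, ‖fderiv ℝ g x‖ ^ 2 :=
  even_reflection_lipschitz_and_integrals_general d i H hH g K hg hsupp g_r hg_r
end

section
/- Let d ≥ 1, b ≥ 1, and let A : ℝ^d → (linear maps ℝ^d → ℝ^d) be measurable with A(z) symmetric and b^{−1}‖ξ‖² ≤ ⟨A(z)ξ, ξ⟩ ≤ b‖ξ‖² for all z ∈ ℝ^d and ξ ∈ ℝ^d. Set w(z) := √(det A(z)). Assume the Euclidean Faber–Krahn hypothesis with constant c > 0. Then for every nonempty bounded open set O ⊆ ℝ^d and every Lipschitz function f : ℝ^d → ℝ with compact support contained in O, ∫_{ℝ^d} ⟨A(z)∇f(z), ∇f(z)⟩ w(z) dz ≥ c · b^{−(d+2)} · (∫_O w(z) dz)^{−2/d} · ∫_{ℝ^d} f(z)² w(z) dz. -/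
open MeasureTheory Metric Bornology
open scoped RealInnerProductSpace


lemma det_bounds_aux {d : ℕ} {b : ℝ} (hb : 1 ≤ b)
    (T : EuclideanSpace ℝ (Fin d) →L[ℝ] EuclideanSpace ℝ (Fin d))
    (hsymm : ∀ ξ η : EuclideanSpace ℝ (Fin d), ⟪T ξ, η⟫ = ⟪ξ, T η⟫)
    (hl : ∀ ξ : EuclideanSpace ℝ (Fin d), b⁻¹ * ‖ξ‖ ^ 2 ≤ ⟪T ξ, ξ⟫)
    (hu : ∀ ξ : EuclideanSpace ℝ (Fin d), ⟪T ξ, ξ⟫ ≤ b * ‖ξ‖ ^ 2) :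
    b⁻¹ ^ d ≤ LinearMap.det (T : EuclideanSpace ℝ (Fin d) →ₗ[ℝ] EuclideanSpace ℝ (Fin d)) ∧
      LinearMap.det (T : EuclideanSpace ℝ (Fin d) →ₗ[ℝ] EuclideanSpace ℝ (Fin d)) ≤ b ^ d := by
  have hb0 : (0:ℝ) < b := lt_of_lt_of_le one_pos hb
  have hT : (T : EuclideanSpace ℝ (Fin d) →ₗ[ℝ] EuclideanSpace ℝ (Fin d)).IsSymmetric :=
    fun ξ η => hsymm ξ η
  have hn : Module.finrank ℝ (EuclideanSpace ℝ (Fin d)) = d := finrank_euclideanSpace_fin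
  set B := hT.eigenvectorBasis hn with hB
  set μ := hT.eigenvalues hn with hμdef
  have hμ : ∀ i, b⁻¹ ≤ μ i ∧ μ i ≤ b := by
    intro i
    have hv : T (B i) = μ i • B i := hT.apply_eigenvectorBasis hn i
    have hnorm : ‖B i‖ = 1 := B.orthonormal.1 i
    have hip : ⟪T (B i), B i⟫ = μ i := by
      rw [hv, real_inner_smul_left, real_inner_self_eq_norm_sq, hnorm]; ring
    constructor
    · have := hl (B i); rw [hnorm, hip] at this; simpa using this
    · have := hu (B i); rw [hnorm, hip] at this; simpa using this
  have hdiag : LinearMap.toMatrix B.toBasis B.toBasis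
      (T : EuclideanSpace ℝ (Fin d) →ₗ[ℝ] EuclideanSpace ℝ (Fin d)) = Matrix.diagonal μ := by
    ext i j
    rw [LinearMap.toMatrix_apply, Matrix.diagonal_apply]
    simp only [OrthonormalBasis.coe_toBasis, ContinuousLinearMap.coe_coe]
    have hv : T (B j) = μ j • B j := hT.apply_eigenvectorBasis hn j
    have hbj : B j = B.toBasis j := (B.coe_toBasis ▸ rfl)
    rw [hv, _root_.map_smul, hbj, Module.Basis.repr_self, Finsupp.smul_apply, Finsupp.single_apply,
      smul_eq_mul]
    by_cases h : i = j <;> simp [h, eq_comm]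
  have hdet : LinearMap.det (T : EuclideanSpace ℝ (Fin d) →ₗ[ℝ] EuclideanSpace ℝ (Fin d))
      = ∏ i, μ i := by
    rw [← LinearMap.det_toMatrix B.toBasis, hdiag, Matrix.det_diagonal]
  constructor
  · rw [hdet]
    calc b⁻¹ ^ d = ∏ _i : Fin d, b⁻¹ := by simp
    _ ≤ ∏ i, μ i := Finset.prod_le_prod (fun i _ => by positivity) (fun i _ => (hμ i).1)
  · rw [hdet]
    calc (∏ i, μ i) ≤ ∏ _i : Fin d, b :=
        Finset.prod_le_prod (fun i _ => le_trans (by positivity) (hμ i).1) (fun i _ => (hμ i).2)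
    _ = b ^ d := by simp

lemma integrable_of_bdd_supp {α : Type*} [MeasurableSpace α] {μ : Measure α} {g : α → ℝ}
    (hg : AEStronglyMeasurable g μ) {s : Set α} (hs : μ s ≠ ⊤)
    (hsub : Function.support g ⊆ s) {C : ℝ} (hC : ∀ x, |g x| ≤ C) : Integrable g μ := by
  rw [← integrableOn_iff_integrable_of_support_subset hsub]
  exact Integrable.mono' (integrableOn_const hs) hg.restrict
    (ae_of_all _ fun x => by simpa [Real.norm_eq_abs] using hC x)


/-- **Faber–Krahn inequality for a uniformly elliptic Riemannian metric in a chart.**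
`A : ℝ^d → Sym(d)` is measurable, symmetric and `b`-quasi-isometric to the Euclidean
metric, `w = √(det A)` is the Riemannian volume density.  Under the Euclidean Faber–Krahn
hypothesis with constant `c`, for every nonempty bounded open `O` and every Lipschitz `f`
with compact support in `O`,
`∫ ⟨A∇f, ∇f⟩ w ≥ c · b^{-(d+2)} · (∫_O w)^{-2/d} · ∫ f² w`. -/
theorem faberKrahn_of_quasi_isometric_metric (d : ℕ) (hd : 1 ≤ d) (b : ℝ) (hb : 1 ≤ b)
    (A : EuclideanSpace ℝ (Fin d) → EuclideanSpace ℝ (Fin d) →L[ℝ] EuclideanSpace ℝ (Fin d))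
    (hAmeas : Measurable A)
    (hAsymm : ∀ (z : EuclideanSpace ℝ (Fin d)) (ξ η : EuclideanSpace ℝ (Fin d)),
      ⟪A z ξ, η⟫ = ⟪ξ, A z η⟫)
    (hAlower : ∀ (z ξ : EuclideanSpace ℝ (Fin d)), b⁻¹ * ‖ξ‖ ^ 2 ≤ ⟪A z ξ, ξ⟫)
    (hAupper : ∀ (z ξ : EuclideanSpace ℝ (Fin d)), ⟪A z ξ, ξ⟫ ≤ b * ‖ξ‖ ^ 2)
    (w : EuclideanSpace ℝ (Fin d) → ℝ)
    (hw : w = fun z => Real.sqrt (LinearMap.det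
      (A z : EuclideanSpace ℝ (Fin d) →ₗ[ℝ] EuclideanSpace ℝ (Fin d))))
    (c : ℝ) (hc : 0 < c) (hFK : EuclideanFaberKrahn d c)
    (O : Set (EuclideanSpace ℝ (Fin d))) (hOne : O.Nonempty) (hOb : IsBounded O)
    (hOopen : IsOpen O)
    (f : EuclideanSpace ℝ (Fin d) → ℝ) (K : NNReal) (hf : LipschitzWith K f)
    (hsupp : IsCompact (tsupport f)) (hsuppO : tsupport f ⊆ O) :
    c * b ^ (-((d : ℝ) + 2)) * (∫ z in O, w z) ^ (-(2 : ℝ) / d) *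
        ∫ z, (f z) ^ 2 * w z ≤
      ∫ z, ⟪A z (gradient f z), gradient f z⟫ * w z := by
  have hb0 : (0:ℝ) < b := lt_of_lt_of_le one_pos hb
  have hd0 : (d:ℝ) ≠ 0 := Nat.cast_ne_zero.2 (by omega)
  set β := Real.sqrt (b ^ d) with hβ
  have hβ0 : (0:ℝ) < β := Real.sqrt_pos.2 (by positivity)
  have hβrpow : β = b ^ ((d:ℝ)/2) := by
    rw [hβ, ← Real.rpow_natCast b d, Real.sqrt_eq_rpow, ← Real.rpow_mul hb0.le]
    congr 1; ring
  -- bounds on w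
  have hwbounds : ∀ z, β⁻¹ ≤ w z ∧ w z ≤ β := by
    intro z
    obtain ⟨h1, h2⟩ := det_bounds_aux hb (A z) (hAsymm z) (hAlower z) (hAupper z)
    rw [hw]
    refine ⟨?_, Real.sqrt_le_sqrt h2⟩
    have hβinv : β⁻¹ = Real.sqrt (b⁻¹ ^ d) := by
      rw [hβ, ← Real.sqrt_inv, ← inv_pow]
    rw [hβinv]
    exact Real.sqrt_le_sqrt h1
  have hwpos : ∀ z, 0 < w z := fun z => lt_of_lt_of_le (by positivity) (hwbounds z).1
  -- measurability
  have hgradm : Measurable (gradient f) := by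
    have : gradient f = fun x =>
        (InnerProductSpace.toDual ℝ (EuclideanSpace ℝ (Fin d))).symm (fderiv ℝ f x) := rfl
    rw [this]
    exact (InnerProductSpace.toDual ℝ
      (EuclideanSpace ℝ (Fin d))).symm.continuous.measurable.comp (measurable_fderiv ℝ f)
  have hwm : Measurable w := by
    rw [hw]
    exact Real.continuous_sqrt.measurable.comp
      (ContinuousLinearMap.continuous_det.measurable.comp hAmeas)
  have hqm : Measurable fun z => ⟪A z (gradient f z), gradient f z⟫ := by
    have h1 : Measurable fun z => A z (gradient f z) :=
      isBoundedBilinearMap_apply.continuous.measurable.comp (hAmeas.prodMk hgradm)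
    exact h1.inner hgradm
  -- support facts
  have hgradnorm : ∀ z, ‖gradient f z‖ = ‖fderiv ℝ f z‖ := fun z =>
    LinearIsometryEquiv.norm_map _ _
  have hgrad0 : ∀ z ∉ tsupport f, gradient f z = 0 := by
    intro z hz
    have h0 : fderiv ℝ f z = 0 := by
      by_contra h
      exact hz (support_fderiv_subset ℝ h)
    show (InnerProductSpace.toDual ℝ (EuclideanSpace ℝ (Fin d))).symm (fderiv ℝ f z) = 0
    rw [h0]; simp
  have hK : ∀ z, ‖fderiv ℝ f z‖ ≤ (K:ℝ) := fun z => norm_fderiv_le_of_lipschitz ℝ hf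
  obtain ⟨M, hM⟩ : ∃ M : ℝ, ∀ x, |f x| ≤ M := by
    obtain ⟨M, hM⟩ := hsupp.exists_bound_of_continuousOn hf.continuous.continuousOn
    refine ⟨max M 0, fun x => ?_⟩
    by_cases hx : x ∈ tsupport f
    · exact le_max_of_le_left (by simpa [Real.norm_eq_abs] using hM x hx)
    · simp [image_eq_zero_of_notMem_tsupport hx]
  have hμs : volume (tsupport f) ≠ ⊤ := hsupp.measure_lt_top.ne
  -- integrabilities
  have int_f : Integrable (fun z => f z ^ 2) := by
    refine integrable_of_bdd_supp ((hf.continuous.pow 2).measurable.aestronglyMeasurable) hμs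
      (fun z hz => subset_tsupport f ?_) (C := M ^ 2) (fun x => ?_)
    · simp only [Function.mem_support] at hz ⊢
      intro h0; exact hz (by rw [h0]; ring)
    · rw [abs_of_nonneg (sq_nonneg _), ← sq_abs]
      exact pow_le_pow_left₀ (abs_nonneg _) (hM x) 2
  have int_fw : Integrable (fun z => f z ^ 2 * w z) := by
    refine integrable_of_bdd_supp (((hf.continuous.pow 2).measurable.mul
      hwm).aestronglyMeasurable) hμs (fun z hz => subset_tsupport f ?_)
      (C := M ^ 2 * β) (fun x => ?_)
    · simp only [Function.mem_support] at hz ⊢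
      intro h0; exact hz (by rw [h0]; ring)
    · have h1 := hM x
      have h2 := (hwbounds x).2
      have h3 := (hwpos x).le
      rw [abs_mul, abs_of_nonneg (sq_nonneg _), abs_of_nonneg h3, ← sq_abs]
      exact mul_le_mul (pow_le_pow_left₀ (abs_nonneg _) h1 2) h2 h3 (by positivity)
  have int_g : Integrable (fun z => ‖fderiv ℝ f z‖ ^ 2) := by
    refine integrable_of_bdd_supp (((measurable_fderiv ℝ f).norm.pow_const
      2).aestronglyMeasurable) hμs (fun z hz => support_fderiv_subset ℝ ?_)
      (C := (K:ℝ) ^ 2) (fun x => ?_)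
    · simp only [Function.mem_support] at hz ⊢
      intro h0; exact hz (by rw [h0]; simp)
    · rw [abs_of_nonneg (sq_nonneg _)]
      exact pow_le_pow_left₀ (norm_nonneg _) (hK x) 2
  have int_A : Integrable (fun z => ⟪A z (gradient f z), gradient f z⟫ * w z) := by
    refine integrable_of_bdd_supp ((hqm.mul hwm).aestronglyMeasurable) hμs
      (fun z hz => ?_) (C := b * (K:ℝ) ^ 2 * β) (fun x => ?_)
    · by_contra hzs
      apply hz
      simp only [Function.mem_support] at hz
      rw [hgrad0 z hzs] at hz
      simp at hz
    · have h0 : (0:ℝ) ≤ ⟪A x (gradient f x), gradient f x⟫ :=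
        le_trans (by positivity) (hAlower x _)
      have h1 : ⟪A x (gradient f x), gradient f x⟫ ≤ b * (K:ℝ) ^ 2 := by
        refine le_trans (hAupper x _) ?_
        rw [hgradnorm x]
        exact mul_le_mul_of_nonneg_left
          (pow_le_pow_left₀ (norm_nonneg _) (hK x) 2) hb0.le
      rw [abs_mul, abs_of_nonneg h0, abs_of_nonneg (hwpos x).le]
      exact mul_le_mul h1 (hwbounds x).2 (hwpos x).le (by positivity)
  -- volume facts
  have hVfin : volume O ≠ ⊤ := hOb.measure_lt_top.ne
  have hV0 : 0 < (volume O).toReal :=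
    ENNReal.toReal_pos (hOopen.measure_pos volume hOne).ne' hVfin
  have intwO : IntegrableOn w O := by
    refine Integrable.mono' (integrableOn_const (C := β) hVfin)
      hwm.aestronglyMeasurable.restrict (ae_of_all _ fun x => ?_)
    rw [Real.norm_eq_abs, abs_of_nonneg (hwpos x).le]
    exact (hwbounds x).2
  have hWlow : β⁻¹ * (volume O).toReal ≤ ∫ z in O, w z :=
    by have := setIntegral_ge_of_const_le_real hOopen.measurableSet hVfin (fun x _ => (hwbounds x).1) intwO
       exact this
  have hW0 : 0 < ∫ z in O, w z := lt_of_lt_of_le (by positivity) hWlow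
  have hIf0 : 0 ≤ ∫ z, f z ^ 2 := integral_nonneg fun z => sq_nonneg _
  -- Faber-Krahn
  have hFK' := hFK O hOne hOb hOopen f K hf hsupp hsuppO
  -- step C
  have hC : ∫ z, f z ^ 2 * w z ≤ β * ∫ z, f z ^ 2 := by
    rw [← integral_const_mul]
    exact integral_mono int_fw (int_f.const_mul β)
      (fun z => by nlinarith [(hwbounds z).2, sq_nonneg (f z)])
  -- step D
  have hexp : -(2:ℝ)/d ≤ 0 := div_nonpos_of_nonpos_of_nonneg (by norm_num) (Nat.cast_nonneg d)
  have hD : (∫ z in O, w z) ^ (-(2:ℝ)/d) ≤ b * (volume O).toReal ^ (-(2:ℝ)/d) := by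
    have h1 := Real.rpow_le_rpow_of_nonpos (by positivity) hWlow hexp
    refine le_trans h1 (le_of_eq ?_)
    rw [Real.mul_rpow (by positivity) ENNReal.toReal_nonneg]
    congr 1
    rw [hβrpow, ← Real.rpow_neg hb0.le, ← Real.rpow_mul hb0.le]
    rw [show -((d:ℝ)/2) * (-(2:ℝ)/d) = 1 by field_simp]
    exact Real.rpow_one b
  -- step A
  have hA : b⁻¹ * β⁻¹ * ∫ z, ‖fderiv ℝ f z‖ ^ 2 ≤
      ∫ z, ⟪A z (gradient f z), gradient f z⟫ * w z := by
    rw [← integral_const_mul]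
    refine integral_mono (int_g.const_mul _) int_A (fun z => ?_)
    have h2 := hAlower z (gradient f z)
    rw [hgradnorm z] at h2
    have h3 := (hwbounds z).1
    have h4 : (0:ℝ) ≤ b⁻¹ * ‖fderiv ℝ f z‖ ^ 2 := by positivity
    calc b⁻¹ * β⁻¹ * ‖fderiv ℝ f z‖ ^ 2
        = (b⁻¹ * ‖fderiv ℝ f z‖ ^ 2) * β⁻¹ := by ring
      _ ≤ ⟪A z (gradient f z), gradient f z⟫ * w z :=
        mul_le_mul (le_trans h2 (le_refl _)) h3 (by positivity) (le_trans h4 h2)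
  -- key exponent identity
  have hbb : b ^ (-((d:ℝ)+2)) * b * β = b⁻¹ * β⁻¹ := by
    rw [hβrpow]
    rw [show b ^ (-((d:ℝ)+2)) * b * b ^ ((d:ℝ)/2)
        = b ^ (-((d:ℝ)+2)) * b ^ ((d:ℝ)/2) * b by ring]
    rw [← Real.rpow_add hb0, ← Real.rpow_add_one hb0.ne']
    rw [show -((d:ℝ)+2) + (d:ℝ)/2 + 1 = -(1:ℝ) + -((d:ℝ)/2) by ring]
    rw [Real.rpow_add hb0, Real.rpow_neg_one, Real.rpow_neg hb0.le]
  -- assembly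
  have m1 : (0:ℝ) ≤ c * b ^ (-((d:ℝ)+2)) * (∫ z in O, w z) ^ (-(2:ℝ)/d) := by positivity
  calc c * b ^ (-((d : ℝ) + 2)) * (∫ z in O, w z) ^ (-(2 : ℝ) / d) * ∫ z, (f z) ^ 2 * w z
      ≤ c * b ^ (-((d:ℝ)+2)) * (∫ z in O, w z) ^ (-(2:ℝ)/d) * (β * ∫ z, f z ^ 2) :=
        mul_le_mul_of_nonneg_left hC m1
    _ ≤ c * b ^ (-((d:ℝ)+2)) * (b * (volume O).toReal ^ (-(2:ℝ)/d)) * (β * ∫ z, f z ^ 2) :=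
        mul_le_mul_of_nonneg_right (mul_le_mul_of_nonneg_left hD (by positivity))
          (by positivity)
    _ = b⁻¹ * β⁻¹ * (c * (volume O).toReal ^ (-(2:ℝ)/d) * ∫ z, f z ^ 2) := by
        rw [← hbb]; ring
    _ ≤ b⁻¹ * β⁻¹ * ∫ z, ‖fderiv ℝ f z‖ ^ 2 :=
        mul_le_mul_of_nonneg_left hFK' (by positivity)
    _ ≤ ∫ z, ⟪A z (gradient f z), gradient f z⟫ * w z := hA
end

section
/- Let (X, d) be a metric space and μ a Borel measure on X with 0 < μ(B_r(x)) < ∞ for all x ∈ X and r > 0, satisfying the uniform local doubling property with constant C_LD ≥ 1 and exponent D ≥ 0. Let ε > 0, Λ ≥ 0, C₀ > 0, and let p : (0, 1] × X × X → [0, ∞) satisfy p(t, x, y) ≤ C₀ · μ(B_{√t}(x))^{−1/2} · μ(B_{√t}(y))^{−1/2} · exp(−d(x, y)²/((4 + ε/2)t) − Λt) for all t ∈ (0, 1] and x, y ∈ X. Then there exists a constant C > 0, depending only on D, C_LD, C₀ and ε, such that for all t ∈ (0, 1] and x, y ∈ X, p(t, x, y) ≤ C · μ(B₁(x))^{−1}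 · t^{−D/2} · exp(−d(x, y)²/((4 + ε)t) − Λt). -/
/-!
Doubling from radius `√t` up to radius `1` around `x`, and up to radius `1 + d` around `y`
(where `d = d(x,y)` and `B₁(x) ⊆ B_{1+d}(y)`), bounds the geometric mean of `μ(B_{√t}(x))⁻¹` and
`μ(B_{√t}(y))⁻¹` by `C_LD e^{C_LD} μ(B₁(x))⁻¹ t^{-D/2} (1+d)^{D/2} e^{C_LD d/2}`. The last two
factors are at most `e^{a d}` with `a = (D + C_LD)/2`, and this is absorbed by the slack in the
Gaussian: with `c = 1/(4+ε/2) - 1/(4+ε)` and `t ≤ 1`,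
`d²/((4+ε/2)t) ≥ d²/((4+ε)t) + c d²`, while `a d - c d² ≤ a²/(4c)`.
-/

open MeasureTheory Metric ENNReal

universe u

lemma rpow_neg_half_mul_rpow_neg_half_le_sqrt_div {A B V K₁ K₂ : ℝ} (hA : 0 < A) (hB : 0 < B)
    (hV : 0 < V) (h₁ : V ≤ K₁ * A) (h₂ : V ≤ K₂ * B) :
    A ^ (-(1 : ℝ) / 2) * B ^ (-(1 : ℝ) / 2) ≤ √(K₁ * K₂) / V := by
  have hK₁ : 0 ≤ K₁ := by nlinarith
  have hK₂ : 0 ≤ K₂ := by nlinarith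
  have h_sqrt : ∀ {x : ℝ}, 0 < x → x ^ (-(1 : ℝ) / 2) = (√x)⁻¹ := fun hx => by
    rw [neg_div, Real.rpow_neg hx.le, Real.sqrt_eq_rpow]
  have hVsq : V ≤ √(K₁ * K₂) * (√A * √B) :=
    calc V = √V * √V := (Real.mul_self_sqrt hV.le).symm
      _ ≤ √(K₁ * A) * √(K₂ * B) := by gcongr
      _ = √(K₁ * K₂) * (√A * √B) := by
        rw [Real.sqrt_mul hK₁, Real.sqrt_mul hK₂, Real.sqrt_mul hK₁]; ring
  rw [h_sqrt hA, h_sqrt hB, ← mul_inv, le_div_iff₀ hV, inv_mul_le_iff₀ (by positivity)]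
  linarith

lemma sqrt_mul_doubling_factors {C D s d : ℝ} (hC : 0 ≤ C) (hs : 0 < s) (hd : 0 ≤ d) :
    √((C * (1 / s) ^ D * Real.exp (C * 1)) * (C * ((1 + d) / s) ^ D * Real.exp (C * (1 + d))))
      = C * (s ^ 2) ^ (-D / 2) * (1 + d) ^ (D / 2) * Real.exp (C * (2 + d) / 2) := by
  have h_half : ∀ {x : ℝ} (y : ℝ), 0 < x → x ^ (y / 2) * x ^ (y / 2) = x ^ y :=
    fun y hx => by rw [← Real.rpow_add hx, add_halves]
  have h_pow : (1 / s) ^ D * ((1 + d) / s) ^ D = (1 + d) ^ D * (s ^ 2) ^ (-D) := by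
    rw [← Real.mul_rpow (by positivity) (by positivity), Real.rpow_neg (by positivity),
      ← Real.inv_rpow (by positivity), ← Real.mul_rpow (by positivity) (by positivity)]
    congr 1; field_simp
  have h_exp : Real.exp (C * (2 + d) / 2) * Real.exp (C * (2 + d) / 2)
      = Real.exp (C * 1) * Real.exp (C * (1 + d)) := by
    rw [← Real.exp_add, ← Real.exp_add]; ring_nf
  rw [Real.sqrt_eq_iff_mul_self_eq (by positivity) (by positivity)]
  calc _ = C ^ 2 * ((1 / s) ^ D * ((1 + d) / s) ^ D)
        * (Real.exp (C * 1) * Real.exp (C * (1 + d))) := by ring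
    _ = _ := by
      rw [h_pow, ← h_exp, ← h_half D (by positivity : (0:ℝ) < 1 + d),
        ← h_half (-D) (by positivity : (0:ℝ) < s ^ 2)]
      ring

def IsUniformlyLocallyDoubling {X : Type*} [PseudoMetricSpace X] [MeasurableSpace X]
    (μ : Measure X) (C D : ℝ) : Prop :=
  ∀ (x : X) (s s' : ℝ), 0 < s' → s' ≤ s →
    μ (ball x s) ≤ ENNReal.ofReal (C * (s / s') ^ D * Real.exp (C * s)) * μ (ball x s')

namespace IsUniformlyLocallyDoubling

variable {X : Type*} [PseudoMetricSpace X] [MeasurableSpace X] {μ : Measure X} {C D : ℝ}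

lemma toReal_measure_ball_le (h : IsUniformlyLocallyDoubling μ C D) (hC : 0 ≤ C) {x y : X}
    {R r : ℝ} (hr : 0 < r) (hrR : r ≤ R) (hfin : μ (ball y r) ≠ ⊤) :
    (μ (ball x R)).toReal ≤
      C * ((R + dist x y) / r) ^ D * Real.exp (C * (R + dist x y)) * (μ (ball y r)).toReal := by
  have hR : r ≤ R + dist x y := hrR.trans (le_add_of_nonneg_right dist_nonneg)
  have hK : 0 ≤ C * ((R + dist x y) / r) ^ D * Real.exp (C * (R + dist x y)) := by
    have := hr.trans_le hR
    positivity
  refine ENNReal.toReal_le_of_le_ofReal (by positivity) ?_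
  calc μ (ball x R) ≤ μ (ball y (R + dist x y)) := measure_mono (ball_subset_ball' le_rfl)
    _ ≤ _ := h y _ r hr hR
    _ = _ := by rw [ENNReal.ofReal_mul hK, ENNReal.ofReal_toReal hfin]

lemma rpow_neg_half_mul_rpow_neg_half_le (h : IsUniformlyLocallyDoubling μ C D) (hC : 0 ≤ C)
    (hball : ∀ (z : X) (r : ℝ), 0 < r → 0 < μ (ball z r) ∧ μ (ball z r) < ⊤)
    (x y : X) {r : ℝ} (hr : 0 < r) (hr1 : r ≤ 1) :
    (μ (ball x r)).toReal ^ (-(1 : ℝ) / 2) * (μ (ball y r)).toReal ^ (-(1 : ℝ) / 2) ≤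
      C * (r ^ 2) ^ (-D / 2) * (1 + dist x y) ^ (D / 2) * Real.exp (C * (2 + dist x y) / 2) /
        (μ (ball x 1)).toReal := by
  have hpos (z : X) {ρ : ℝ} (hρ : 0 < ρ) : 0 < (μ (ball z ρ)).toReal :=
    ENNReal.toReal_pos (hball z ρ hρ).1.ne' (hball z ρ hρ).2.ne
  have h₁ := h.toReal_measure_ball_le hC (x := x) (y := x) hr hr1 (hball x r hr).2.ne
  have h₂ := h.toReal_measure_ball_le hC (x := x) (y := y) hr hr1 (hball y r hr).2.ne
  rw [dist_self, add_zero] at h₁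
  rw [← sqrt_mul_doubling_factors hC hr dist_nonneg]
  exact rpow_neg_half_mul_rpow_neg_half_le_sqrt_div (hpos x hr) (hpos y hr) (hpos x one_pos) h₁ h₂

end IsUniformlyLocallyDoubling

lemma mul_sub_sq_le {a c d : ℝ} (hc : 0 < c) : a * d - c * d ^ 2 ≤ a ^ 2 / (4 * c) := by
  rw [le_div_iff₀ (by positivity)]
  nlinarith [sq_nonneg (2 * c * d - a)]

lemma one_add_rpow_le_exp_mul {κ d : ℝ} (hκ : 0 ≤ κ) (hd : 0 ≤ d) :
    (1 + d) ^ κ ≤ Real.exp (κ * d) :=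
  calc (1 + d) ^ κ ≤ Real.exp d ^ κ := by
        gcongr; linarith [Real.add_one_le_exp d]
    _ = Real.exp (κ * d) := by rw [← Real.exp_mul, mul_comm]

lemma mul_sub_sq_div_le {a d t α β : ℝ} (hα : 0 < α) (hαβ : α < β) (ht : 0 < t)
    (ht1 : t ≤ 1) :
    a * d - d ^ 2 / (α * t) ≤ a ^ 2 / (4 * (1 / α - 1 / β)) - d ^ 2 / (β * t) := by
  have hc : 0 < 1 / α - 1 / β := sub_pos.2 (one_div_lt_one_div_of_lt hα hαβ)
  have h_gap : d ^ 2 / (α * t) - d ^ 2 / (β * t) = (1 / α - 1 / β) * (d ^ 2 / t) := by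
    field_simp
  have h_t : (1 / α - 1 / β) * d ^ 2 ≤ (1 / α - 1 / β) * (d ^ 2 / t) := by
    gcongr
    exact le_div_self (sq_nonneg d) ht ht1
  linarith [mul_sub_sq_le (a := a) (d := d) hc]

lemma one_add_rpow_mul_exp_le {κ b d t α β Λ : ℝ} (hκ : 0 ≤ κ) (hd : 0 ≤ d) (hα : 0 < α)
    (hαβ : α < β) (ht : 0 < t) (ht1 : t ≤ 1) :
    (1 + d) ^ κ * Real.exp (b * d) * Real.exp (-d ^ 2 / (α * t) - Λ * t) ≤
      Real.exp ((κ + b) ^ 2 / (4 * (1 / α - 1 / β))) * Real.exp (-d ^ 2 / (β * t) - Λ * t) := by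
  calc _ ≤ Real.exp (κ * d) * Real.exp (b * d) * Real.exp (-d ^ 2 / (α * t) - Λ * t) := by
        gcongr; exact one_add_rpow_le_exp_mul hκ hd
    _ = Real.exp ((κ + b) * d - d ^ 2 / (α * t) - Λ * t) := by
        rw [← Real.exp_add, ← Real.exp_add]; ring_nf
    _ ≤ _ := by
        rw [← Real.exp_add, Real.exp_le_exp]
        linear_combination mul_sub_sq_div_le (a := κ + b) (d := d) hα hαβ ht ht1

/-- **Decoupled heat kernel upper bound from a Gaussian bound and local doubling.**
There is a constant `C > 0` depending only on the doubling data `D, C_LD`, the Gaussian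
constant `C₀` and `ε > 0` such that: on any metric measure space whose balls have positive
finite measure and which is uniformly locally doubling with constant `C_LD` and exponent
`D`, any kernel `p` satisfying Sturm's Gaussian upper bound
`p(t,x,y) ≤ C₀ μ(B_{√t}(x))^{-1/2} μ(B_{√t}(y))^{-1/2} exp(-d(x,y)²/((4+ε/2)t) - Λt)`
for `t ∈ (0,1]` also satisfies
`p(t,x,y) ≤ C μ(B₁(x))^{-1} t^{-D/2} exp(-d(x,y)²/((4+ε)t) - Λt)` for `t ∈ (0,1]`. -/
theorem heat_kernel_decoupled_upper_bound
    (D C_LD C₀ ε : ℝ) (hD : 0 ≤ D) (hCLD : 1 ≤ C_LD) (hC₀ : 0 < C₀) (hε : 0 < ε) :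
    ∃ C : ℝ, 0 < C ∧
      ∀ (X : Type u) [MetricSpace X] [MeasurableSpace X] [BorelSpace X]
        (μ : Measure X),
        (∀ (x : X) (r : ℝ), 0 < r → 0 < μ (ball x r) ∧ μ (ball x r) < ⊤) →
        (∀ (x : X) (s s' : ℝ), 0 < s' → s' ≤ s →
          μ (ball x s) ≤
            ENNReal.ofReal (C_LD * (s / s') ^ D * Real.exp (C_LD * s)) * μ (ball x s')) →
        ∀ (Λ : ℝ), 0 ≤ Λ →
        ∀ (p : ℝ → X → X → ℝ),
          (∀ (t : ℝ) (x y : X), 0 < t → t ≤ 1 → 0 ≤ p t x y) →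
          (∀ (t : ℝ) (x y : X), 0 < t → t ≤ 1 →
            p t x y ≤ C₀ * (μ (ball x (Real.sqrt t))).toReal ^ (-(1 : ℝ) / 2) *
              (μ (ball y (Real.sqrt t))).toReal ^ (-(1 : ℝ) / 2) *
              Real.exp (-(dist x y) ^ 2 / ((4 + ε / 2) * t) - Λ * t)) →
          ∀ (t : ℝ) (x y : X), 0 < t → t ≤ 1 →
            p t x y ≤ C * (μ (ball x 1)).toReal⁻¹ * t ^ (-D / 2) *
              Real.exp (-(dist x y) ^ 2 / ((4 + ε) * t) - Λ * t) := by
  have hC : 0 ≤ C_LD := by linarith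
  have hαβ : 4 + ε / 2 < 4 + ε := by linarith
  refine ⟨C₀ * C_LD * Real.exp (C_LD +
    (D / 2 + C_LD / 2) ^ 2 / (4 * (1 / (4 + ε / 2) - 1 / (4 + ε)))), by positivity, ?_⟩
  intro X _ _ _ μ hball hdoub Λ _ p _ hp t x y ht ht1
  have hdoub : IsUniformlyLocallyDoubling μ C_LD D := hdoub
  have h_vol := hdoub.rpow_neg_half_mul_rpow_neg_half_le hC hball x y (Real.sqrt_pos.2 ht)
    (Real.sqrt_le_one.2 ht1)
  rw [Real.sq_sqrt ht.le] at h_vol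
  have h_gauss := one_add_rpow_mul_exp_le (κ := D / 2) (b := C_LD / 2) (Λ := Λ)
    (by positivity) (dist_nonneg (x := x) (y := y)) (by positivity) hαβ ht ht1
  calc p t x y ≤ C₀ * ((μ (ball x √t)).toReal ^ (-(1 : ℝ) / 2) *
        (μ (ball y √t)).toReal ^ (-(1 : ℝ) / 2)) *
        Real.exp (-(dist x y) ^ 2 / ((4 + ε / 2) * t) - Λ * t) := by
        rw [← mul_assoc]; exact hp t x y ht ht1
    _ ≤ C₀ * (C_LD * t ^ (-D / 2) * (1 + dist x y) ^ (D / 2) *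
        Real.exp (C_LD * (2 + dist x y) / 2) / (μ (ball x 1)).toReal) *
        Real.exp (-(dist x y) ^ 2 / ((4 + ε / 2) * t) - Λ * t) := by gcongr
    _ = C₀ * C_LD * Real.exp C_LD * (μ (ball x 1)).toReal⁻¹ * t ^ (-D / 2) *
        ((1 + dist x y) ^ (D / 2) * Real.exp (C_LD / 2 * dist x y) *
          Real.exp (-(dist x y) ^ 2 / ((4 + ε / 2) * t) - Λ * t)) := by
        rw [show C_LD * (2 + dist x y) / 2 = C_LD + C_LD / 2 * dist x y by ring, Real.exp_add]
        ring
    _ ≤ C₀ * C_LD * Real.exp C_LD * (μ (ball x 1)).toReal⁻¹ * t ^ (-D / 2) *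
        (Real.exp ((D / 2 + C_LD / 2) ^ 2 / (4 * (1 / (4 + ε / 2) - 1 / (4 + ε)))) *
          Real.exp (-(dist x y) ^ 2 / ((4 + ε) * t) - Λ * t)) := by gcongr
    _ = _ := by rw [Real.exp_add]; ring
end

section
/- Let (X, 𝒜, μ) be a measure space, Ξ : X → [0, ∞) measurable, p ∈ [1, ∞), and Σ : (0, 1] → [0, ∞) measurable with ∫₀¹ Σ(s)^{1/p} ds < ∞. Let 𝗉 : (0, 1] × X × X → [0, ∞) be jointly measurable with: (i) 𝗉(s, x, y) = 𝗉(s, y, x) for all s ∈ (0, 1] and x, y ∈ X; (ii) ∫_X 𝗉(s, x, y) dμ(y) ≤ 1 for all s ∈ (0, 1] and x ∈ X; (iii) there is C ≥ 0 with 𝗉(s, x, y) ≤ C · Σ(s) · Ξ(x) for all s ∈ (0, 1] and x, y ∈ X. Let k = k₁ + k₂ with k₁, k₂ : X → ℝ measurable, ∫_X |k₁|^p Ξ dμ < ∞, and k₂ essentially bounded. Then lim_{t → 0⁺} sup_{x ∈ X} ∫₀ᵗ (∫_X 𝗉(s, x, y) |k(y)| dμ(y)) ds = 0. -/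
open MeasureTheory ENNReal Filter Topology

/-- Hölder-type bound for a sub-Markovian weight: `∫ f*g ≤ (∫ f * g^p)^(1/p)` when `∫ f ≤ 1`. -/
lemma aux_holder_kato {X : Type*} [MeasurableSpace X] (μ : Measure X) {p : ℝ} (hp : 1 ≤ p)
    (f g : X → ℝ≥0∞) (hf : Measurable f) (hg : Measurable g) (hf1 : ∫⁻ y, f y ∂μ ≤ 1) :
    ∫⁻ y, f y * g y ∂μ ≤ (∫⁻ y, f y * g y ^ p ∂μ) ^ (1 / p) := by
  rcases eq_or_lt_of_le hp with hp1 | hp1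
  · simp [← hp1]
  · have hp0 : (0:ℝ) < p := lt_trans one_pos hp1
    set q : ℝ := Real.conjExponent p with hq
    have hpq : p.HolderConjugate q := Real.HolderConjugate.conjExponent hp1
    have hq0 : (0:ℝ) < q := hpq.symm.pos
    have hsum : 1 / p + 1 / q = 1 := by
      simpa [one_div] using hpq.inv_add_inv_eq_one
    have hptwise : ∀ y, f y * g y = (f y ^ (1/p) * g y) * (f y ^ (1/q)) := by
      intro y
      have hfy : f y ^ (1/p) * f y ^ (1/q) = f y := by
        rw [← ENNReal.rpow_add_of_nonneg _ _ (by positivity) (by positivity), hsum,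
          ENNReal.rpow_one]
      rw [mul_right_comm, hfy]
    calc ∫⁻ y, f y * g y ∂μ
        = ∫⁻ y, ((fun y => f y ^ (1/p) * g y) * fun y => f y ^ (1/q)) y ∂μ := by
          apply lintegral_congr; intro y; simpa using hptwise y
      _ ≤ (∫⁻ y, (f y ^ (1/p) * g y) ^ p ∂μ) ^ (1/p) * (∫⁻ y, (f y ^ (1/q)) ^ q ∂μ) ^ (1/q) :=
          ENNReal.lintegral_mul_le_Lp_mul_Lq μ hpq
            ((hf.pow_const _).mul hg).aemeasurable (hf.pow_const _).aemeasurable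
      _ = (∫⁻ y, f y * g y ^ p ∂μ) ^ (1/p) * (∫⁻ y, f y ∂μ) ^ (1/q) := by
          congr 1
          · congr 1; apply lintegral_congr; intro y
            rw [ENNReal.mul_rpow_of_nonneg _ _ hp0.le, ← ENNReal.rpow_mul,
              one_div_mul_cancel hp0.ne', ENNReal.rpow_one]
          · congr 1; apply lintegral_congr; intro y
            rw [← ENNReal.rpow_mul, one_div_mul_cancel hq0.ne', ENNReal.rpow_one]
      _ ≤ (∫⁻ y, f y * g y ^ p ∂μ) ^ (1/p) * 1 := by
          gcongr
          exact ENNReal.rpow_le_one hf1 (by positivity)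
      _ = (∫⁻ y, f y * g y ^ p ∂μ) ^ (1/p) := mul_one _

/-- Vanishing of the tail integral of an integrable function on `(0,1]`. -/
lemma aux_tendsto_kato (g : ℝ → ℝ≥0∞)
    (hfin : ∫⁻ s in Set.Ioc (0:ℝ) 1, g s < ⊤) :
    Tendsto (fun t : ℝ => ∫⁻ s in Set.Ioc (0:ℝ) t, g s) (𝓝[>] 0) (𝓝 0) := by
  set ν : Measure ℝ := (volume.restrict (Set.Ioc (0:ℝ) 1)).withDensity g with hν
  have hνapp : ∀ t : ℝ, t ≤ 1 → ν (Set.Ioc 0 t) = ∫⁻ s in Set.Ioc (0:ℝ) t, g s := by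
    intro t ht
    rw [hν, withDensity_apply _ measurableSet_Ioc, Measure.restrict_restrict measurableSet_Ioc,
      Set.Ioc_inter_Ioc, sup_idem, inf_eq_left.mpr ht]
  have hempty : (⋂ r > (0:ℝ), Set.Ioc 0 r) = ∅ := by
    ext x
    simp only [Set.mem_iInter, Set.mem_Ioc, Set.mem_empty_iff_false, iff_false, not_forall]
    by_cases hx : 0 < x
    · exact ⟨x/2, by positivity, fun h => absurd (h.2) (not_le.mpr (half_lt_self hx))⟩
    · exact ⟨1, one_pos, fun h => hx h.1⟩
  have h1 : Tendsto (ν ∘ fun t => Set.Ioc (0:ℝ) t) (𝓝[>] 0) (𝓝 0) := by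
    have := tendsto_measure_biInter_gt (μ := ν) (s := fun t => Set.Ioc (0:ℝ) t) (a := 0)
      (fun r _ => measurableSet_Ioc.nullMeasurableSet)
      (fun i j _ hij => Set.Ioc_subset_Ioc_right hij)
      ⟨1, one_pos, by rw [hνapp 1 le_rfl]; exact hfin.ne⟩
    rwa [hempty, measure_empty] at this
  refine Tendsto.congr' ?_ h1
  filter_upwards [Ioc_mem_nhdsGT_of_mem (Set.mem_Ico.mpr ⟨le_rfl, one_pos⟩)] with t ht
  exact hνapp t ht.2

/-- **Kato class criterion from a heat kernel control pair.**  Let `(Ξ, Sg)` control the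
symmetric sub-Markovian kernel `P` via `P(s,x,y) ≤ C·Sg(s)·Ξ(x)` for `s ∈ (0,1]`, with
`∫₀¹ Sg(s)^{1/p} ds < ∞`.  If `k = k₁ + k₂` with `∫ |k₁|^p Ξ dμ < ∞` and `k₂` essentially
bounded, then `lim_{t → 0⁺} sup_x ∫₀ᵗ ∫ P(s,x,y) |k(y)| dμ(y) ds = 0`, i.e. the measure
`k·μ` satisfies the defining vanishing condition of the Kato class. -/
theorem kato_class_of_heat_kernel_control_pair
    {X : Type*} [MeasurableSpace X] (μ : Measure X)
    (Ξ : X → ℝ) (hΞmeas : Measurable Ξ) (hΞ0 : ∀ x, 0 ≤ Ξ x)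
    (p : ℝ) (hp : 1 ≤ p)
    (Sg : ℝ → ℝ) (hSgmeas : Measurable Sg) (hSg0 : ∀ s : ℝ, 0 < s → s ≤ 1 → 0 ≤ Sg s)
    (hSgint : ∫⁻ s in Set.Ioc (0 : ℝ) 1, ENNReal.ofReal (Sg s ^ (1 / p)) < ⊤)
    (P : ℝ → X → X → ℝ)
    (hPmeas : Measurable fun a : ℝ × X × X => P a.1 a.2.1 a.2.2)
    (hP0 : ∀ (s : ℝ) (x y : X), 0 ≤ P s x y)
    (hPsymm : ∀ (s : ℝ) (x y : X), 0 < s → s ≤ 1 → P s x y = P s y x)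
    (hPsub : ∀ (s : ℝ) (x : X), 0 < s → s ≤ 1 → ∫⁻ y, ENNReal.ofReal (P s x y) ∂μ ≤ 1)
    (C : ℝ) (hC : 0 ≤ C)
    (hPbound : ∀ (s : ℝ) (x y : X), 0 < s → s ≤ 1 → P s x y ≤ C * Sg s * Ξ x)
    (k₁ k₂ : X → ℝ) (hk₁meas : Measurable k₁) (hk₂meas : Measurable k₂)
    (hk₁ : ∫⁻ x, ENNReal.ofReal (|k₁ x| ^ p * Ξ x) ∂μ < ⊤)
    (hk₂ : eLpNorm k₂ ⊤ μ < ⊤) :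
    Tendsto
      (fun t : ℝ => ⨆ x : X, ∫⁻ s in Set.Ioc (0 : ℝ) t,
        ∫⁻ y, ENNReal.ofReal (P s x y * |k₁ y + k₂ y|) ∂μ)
      (𝓝[>] (0 : ℝ)) (𝓝 0) := by
  have hp0 : (0:ℝ) < p := lt_of_lt_of_le one_pos hp
  set A : ℝ≥0∞ := ∫⁻ x, ENNReal.ofReal (|k₁ x| ^ p * Ξ x) ∂μ with hAdef
  set M : ℝ≥0∞ := eLpNorm k₂ ⊤ μ with hMdef
  set D : ℝ≥0∞ := (ENNReal.ofReal C) ^ (1/p) * A ^ (1/p) with hDdef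
  have hAne : A ≠ ⊤ := hk₁.ne
  have hMne : M ≠ ⊤ := hk₂.ne
  have hDne : D ≠ ⊤ := mul_ne_top (ENNReal.rpow_ne_top_of_nonneg (by positivity) ofReal_ne_top)
    (ENNReal.rpow_ne_top_of_nonneg (by positivity) hAne)
  have hAeq : A = ∫⁻ x, ENNReal.ofReal (Ξ x) * ENNReal.ofReal |k₁ x| ^ p ∂μ := by
    apply lintegral_congr; intro x
    rw [ENNReal.ofReal_mul (by positivity), ENNReal.ofReal_rpow_of_nonneg (abs_nonneg _) hp0.le,
      mul_comm]
  -- measurability of the kernel in y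
  have hPy : ∀ (s : ℝ) (x : X), Measurable fun y => ENNReal.ofReal (P s x y) := by
    intro s x
    exact ENNReal.measurable_ofReal.comp
      (hPmeas.comp (measurable_const.prodMk (measurable_const.prodMk measurable_id)))
  -- pointwise-in-s bound
  have key : ∀ (s : ℝ), 0 < s → s ≤ 1 → ∀ x : X,
      ∫⁻ y, ENNReal.ofReal (P s x y * |k₁ y + k₂ y|) ∂μ
        ≤ D * ENNReal.ofReal (Sg s ^ (1/p)) + M := by
    intro s hs0 hs1 x
    have hk1bd : ∫⁻ y, ENNReal.ofReal (P s x y) * ENNReal.ofReal |k₁ y| ∂μ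
        ≤ D * ENNReal.ofReal (Sg s ^ (1/p)) := by
      have hinner : ∫⁻ y, ENNReal.ofReal (P s x y) * (ENNReal.ofReal |k₁ y|) ^ p ∂μ
          ≤ ENNReal.ofReal C * ENNReal.ofReal (Sg s) * A := by
        calc ∫⁻ y, ENNReal.ofReal (P s x y) * (ENNReal.ofReal |k₁ y|) ^ p ∂μ
            ≤ ∫⁻ y, ENNReal.ofReal C * ENNReal.ofReal (Sg s) *
                (ENNReal.ofReal (Ξ y) * (ENNReal.ofReal |k₁ y|) ^ p) ∂μ := by
              apply lintegral_mono; intro y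
              dsimp only
              rw [← mul_assoc]
              gcongr
              rw [← ENNReal.ofReal_mul hC, ← ENNReal.ofReal_mul (mul_nonneg hC (hSg0 s hs0 hs1))]
              exact ENNReal.ofReal_le_ofReal
                ((hPsymm s x y hs0 hs1).le.trans (hPbound s y x hs0 hs1))
          _ = ENNReal.ofReal C * ENNReal.ofReal (Sg s) * A := by
              rw [lintegral_const_mul' _ _ (mul_ne_top ofReal_ne_top ofReal_ne_top), ← hAeq]
      calc ∫⁻ y, ENNReal.ofReal (P s x y) * ENNReal.ofReal |k₁ y| ∂μ
          ≤ (∫⁻ y, ENNReal.ofReal (P s x y) * (ENNReal.ofReal |k₁ y|) ^ p ∂μ) ^ (1/p) :=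
            aux_holder_kato μ hp _ _ (hPy s x)
              (ENNReal.measurable_ofReal.comp hk₁meas.abs) (hPsub s x hs0 hs1)
        _ ≤ (ENNReal.ofReal C * ENNReal.ofReal (Sg s) * A) ^ (1/p) := by gcongr
        _ = D * ENNReal.ofReal (Sg s ^ (1/p)) := by
            rw [ENNReal.mul_rpow_of_nonneg _ _ (by positivity),
              ENNReal.mul_rpow_of_nonneg _ _ (by positivity), hDdef,
              ENNReal.ofReal_rpow_of_nonneg (hSg0 s hs0 hs1) (by positivity)]
            ring
    have hk2bd : ∫⁻ y, ENNReal.ofReal (P s x y) * ENNReal.ofReal |k₂ y| ∂μ ≤ M := by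
      have hae : ∀ᵐ y ∂μ, ENNReal.ofReal (P s x y) * ENNReal.ofReal |k₂ y|
          ≤ ENNReal.ofReal (P s x y) * M := by
        filter_upwards [ae_le_eLpNormEssSup (f := k₂) (μ := μ)] with y hy
        apply mul_le_mul_right
        rw [← Real.enorm_eq_ofReal_abs]
        rw [hMdef, eLpNorm_exponent_top]
        exact hy
      calc ∫⁻ y, ENNReal.ofReal (P s x y) * ENNReal.ofReal |k₂ y| ∂μ
          ≤ ∫⁻ y, ENNReal.ofReal (P s x y) * M ∂μ := lintegral_mono_ae hae
        _ = (∫⁻ y, ENNReal.ofReal (P s x y) ∂μ) * M := lintegral_mul_const _ (hPy s x)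
        _ ≤ 1 * M := by gcongr; exact hPsub s x hs0 hs1
        _ = M := one_mul M
    calc ∫⁻ y, ENNReal.ofReal (P s x y * |k₁ y + k₂ y|) ∂μ
        ≤ ∫⁻ y, (ENNReal.ofReal (P s x y) * ENNReal.ofReal |k₁ y| +
            ENNReal.ofReal (P s x y) * ENNReal.ofReal |k₂ y|) ∂μ := by
          apply lintegral_mono; intro y
          dsimp only
          rw [← mul_add, ← ENNReal.ofReal_add (abs_nonneg _) (abs_nonneg _),
            ← ENNReal.ofReal_mul (hP0 s x y)]
          exact ENNReal.ofReal_le_ofReal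
            (mul_le_mul_of_nonneg_left (abs_add_le _ _) (hP0 s x y))
      _ = (∫⁻ y, ENNReal.ofReal (P s x y) * ENNReal.ofReal |k₁ y| ∂μ) +
            ∫⁻ y, ENNReal.ofReal (P s x y) * ENNReal.ofReal |k₂ y| ∂μ :=
          lintegral_add_left ((hPy s x).mul (ENNReal.measurable_ofReal.comp hk₁meas.abs)) _
      _ ≤ D * ENNReal.ofReal (Sg s ^ (1/p)) + M := add_le_add hk1bd hk2bd
  -- the dominating function
  set G : ℝ → ℝ≥0∞ := fun t =>
    D * (∫⁻ s in Set.Ioc (0:ℝ) t, ENNReal.ofReal (Sg s ^ (1/p))) + M * ENNReal.ofReal t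
    with hGdef
  have hbound : ∀ t : ℝ, 0 < t → t ≤ 1 →
      (⨆ x : X, ∫⁻ s in Set.Ioc (0 : ℝ) t,
        ∫⁻ y, ENNReal.ofReal (P s x y * |k₁ y + k₂ y|) ∂μ) ≤ G t := by
    intro t ht0 ht1
    apply iSup_le; intro x
    calc ∫⁻ s in Set.Ioc (0 : ℝ) t, ∫⁻ y, ENNReal.ofReal (P s x y * |k₁ y + k₂ y|) ∂μ
        ≤ ∫⁻ s in Set.Ioc (0 : ℝ) t, (D * ENNReal.ofReal (Sg s ^ (1/p)) + M) := by
          apply lintegral_mono_ae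
          rw [ae_restrict_iff' measurableSet_Ioc]
          exact Eventually.of_forall fun s hs => key s hs.1 (hs.2.trans ht1) x
      _ = D * (∫⁻ s in Set.Ioc (0:ℝ) t, ENNReal.ofReal (Sg s ^ (1/p))) + M * ENNReal.ofReal t := by
          rw [lintegral_add_right _ measurable_const, setLIntegral_const,
            lintegral_const_mul' _ _ hDne, Real.volume_Ioc, sub_zero]
      _ = G t := rfl
  have hG : Tendsto G (𝓝[>] 0) (𝓝 0) := by
    have h1 : Tendsto (fun t : ℝ => D * ∫⁻ s in Set.Ioc (0:ℝ) t, ENNReal.ofReal (Sg s ^ (1/p)))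
        (𝓝[>] 0) (𝓝 0) := by
      have := ENNReal.Tendsto.const_mul (a := D) (aux_tendsto_kato _ hSgint) (Or.inr hDne)
      simpa only [mul_zero] using this
    have h2 : Tendsto (fun t : ℝ => M * ENNReal.ofReal t) (𝓝[>] 0) (𝓝 0) := by
      have hof : Tendsto (fun t : ℝ => ENNReal.ofReal t) (𝓝[>] 0) (𝓝 0) := by
        have : Tendsto (fun t : ℝ => t) (𝓝[>] (0:ℝ)) (𝓝 0) :=
          tendsto_id.mono_left nhdsWithin_le_nhds
        simpa only [ENNReal.ofReal_zero] using ENNReal.tendsto_ofReal this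
      have := ENNReal.Tendsto.const_mul (a := M) hof (Or.inr hMne)
      simpa only [mul_zero] using this
    simpa only [add_zero] using h1.add h2
  refine tendsto_of_tendsto_of_tendsto_of_le_of_le' tendsto_const_nhds hG
    (Eventually.of_forall fun t => zero_le) ?_
  filter_upwards [Ioc_mem_nhdsGT_of_mem (Set.mem_Ico.mpr ⟨le_rfl, one_pos⟩)] with t ht
  exact hbound t ht.1 ht.2
end

section
/- Let (X, dist) be a metric space, σ a Borel measure on X, U ⊆ X a Borel set, m ≥ 1 an integer, c > 0, and φ : X → ℝ^{m} a map with ‖φ(x) − φ(y)‖ ≤ c · dist(x, y) for all x, y ∈ X and such that the pushforward under φ of the restriction of σ to U satisfies φ_*(σ|_U) ≤ c · ℒ^{m} as measures on ℝ^{m}. Then for every x ∈ X, every r > 0 and every α ≥ 0, ∫_{B_r(x) ∩ U} dist(x, y)^{−α} dσ(y) ≤ c^{α+1} · ∫_{B_{cr}(0)} ‖z‖^{−α} dℒ^{m}(z), where B_{cr}(0) is the open Euclidean ball of radius cr in ℝ^{m} and the integrals take values in [0, ∞]. -/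
open MeasureTheory Metric ENNReal

/-- **Riesz-type potential estimate in a weakly Lipschitz boundary chart.**
Let `σ` be a Borel measure on a metric space `X`, `U ⊆ X` Borel, and `φ : X → ℝ^m`
a `c`-Lipschitz map with `φ_*(σ|_U) ≤ c·ℒ^m`.  Then for every `x`, `r > 0` and `α ≥ 0`,
`∫_{B_r(x) ∩ U} dist(x,·)^{-α} dσ ≤ c^{α+1} ∫_{B_{cr}(0)} ‖z‖^{-α} dℒ^m(z)`. -/
theorem riesz_potential_bound_of_lipschitz_chart
    {X : Type*} [MetricSpace X] [MeasurableSpace X] [BorelSpace X]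
    (σ : Measure X) (U : Set X) (hU : MeasurableSet U)
    (m : ℕ) (hm : 1 ≤ m) (c : ℝ) (hc : 0 < c)
    (φ : X → EuclideanSpace ℝ (Fin m))
    (hφlip : ∀ x y : X, ‖φ x - φ y‖ ≤ c * dist x y)
    (hpush : Measure.map φ (σ.restrict U) ≤ ENNReal.ofReal c • volume) :
    ∀ (x : X) (r α : ℝ), 0 < r → 0 ≤ α →
      (∫⁻ y in ball x r ∩ U, ENNReal.ofReal (dist x y) ^ (-α) ∂σ) ≤
        ENNReal.ofReal (c ^ (α + 1)) *
          ∫⁻ z in ball (0 : EuclideanSpace ℝ (Fin m)) (c * r),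
            ENNReal.ofReal ‖z‖ ^ (-α) ∂volume := by
  intro x r α hr hα
  have hφmeas : Measurable φ := by
    have : LipschitzWith ⟨c, hc.le⟩ φ := by
      apply LipschitzWith.of_dist_le_mul
      intro a b
      rw [dist_eq_norm]
      exact hφlip a b
    exact this.continuous.measurable
  -- the comparison function on ℝ^m
  set R : ℝ := c * r with hR
  set g : EuclideanSpace ℝ (Fin m) → ℝ≥0∞ :=
    (ball (φ x) R).indicator (fun z => ENNReal.ofReal (‖φ x - z‖ / c) ^ (-α)) with hg
  have hginner : Measurable (fun z : EuclideanSpace ℝ (Fin m) =>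
      ENNReal.ofReal (‖φ x - z‖ / c) ^ (-α)) := by
    apply Measurable.pow_const
    apply ENNReal.measurable_ofReal.comp
    exact (measurable_const.sub measurable_id').norm.div_const c
  have hgmeas : Measurable g := hginner.indicator measurableSet_ball
  -- step 1: pointwise bound on the domain
  have step1 : (∫⁻ y in ball x r ∩ U, ENNReal.ofReal (dist x y) ^ (-α) ∂σ) ≤
      ∫⁻ y in U, g (φ y) ∂σ := by
    refine le_trans (setLIntegral_mono' ((measurableSet_ball).inter hU) ?_)
      (lintegral_mono_set Set.inter_subset_right)
    intro y hy
    have hmem : φ y ∈ ball (φ x) R := by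
      rw [mem_ball, dist_eq_norm, norm_sub_rev]
      calc ‖φ x - φ y‖ ≤ c * dist x y := hφlip x y
        _ < c * r := by
          exact mul_lt_mul_of_pos_left (by simpa [dist_comm] using hy.1) hc
    rw [hg, Set.indicator_of_mem hmem]
    -- antitone in base for negative exponent
    have hle : ‖φ x - φ y‖ / c ≤ dist x y := by
      rw [div_le_iff₀ hc, mul_comm]
      exact hφlip x y
    rw [ENNReal.rpow_neg, ENNReal.rpow_neg]
    exact ENNReal.inv_le_inv.mpr (ENNReal.rpow_le_rpow (ENNReal.ofReal_le_ofReal hle) hα)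
  -- step 2: pushforward
  have step2 : (∫⁻ y in U, g (φ y) ∂σ) ≤ ENNReal.ofReal c * ∫⁻ z, g z ∂volume := by
    rw [← lintegral_map hgmeas hφmeas]
    calc (∫⁻ z, g z ∂(Measure.map φ (σ.restrict U)))
        ≤ ∫⁻ z, g z ∂(ENNReal.ofReal c • volume) := lintegral_mono' hpush le_rfl
      _ = ENNReal.ofReal c * ∫⁻ z, g z ∂volume := lintegral_smul_measure _ _
  -- step 3: translate the ball to the origin
  have step3 : (∫⁻ z, g z ∂volume) =
      ∫⁻ w in ball (0 : EuclideanSpace ℝ (Fin m)) R,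
        ENNReal.ofReal (‖w‖ / c) ^ (-α) ∂volume := by
    rw [hg, lintegral_indicator measurableSet_ball]
    have hmp : MeasurePreserving (fun w : EuclideanSpace ℝ (Fin m) => φ x - w) volume volume :=
      Measure.measurePreserving_sub_left volume (φ x)
    rw [← hmp.setLIntegral_comp_preimage measurableSet_ball hginner]
    have hpre : (fun w : EuclideanSpace ℝ (Fin m) => φ x - w) ⁻¹' ball (φ x) R = ball 0 R := by
      ext w
      simp [mem_ball, dist_eq_norm]
    rw [hpre]
    refine setLIntegral_congr_fun measurableSet_ball (fun w _ => ?_)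
    rw [_root_.sub_sub_cancel]
  -- step 4: pull out the constant c^α
  have step4 : (∫⁻ w in ball (0 : EuclideanSpace ℝ (Fin m)) R,
        ENNReal.ofReal (‖w‖ / c) ^ (-α) ∂volume) =
      ENNReal.ofReal c ^ α * ∫⁻ w in ball (0 : EuclideanSpace ℝ (Fin m)) R,
        ENNReal.ofReal ‖w‖ ^ (-α) ∂volume := by
    rw [← lintegral_const_mul' _ _ (ENNReal.rpow_ne_top_of_nonneg hα ENNReal.ofReal_ne_top)]
    congr 1
    ext w
    rw [ENNReal.ofReal_div_of_pos hc, ENNReal.div_eq_inv_mul,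
      ENNReal.mul_rpow_of_ne_top (by simp [hc]) ENNReal.ofReal_ne_top,
      ENNReal.inv_rpow, ← ENNReal.rpow_neg, neg_neg, mul_comm]
  calc (∫⁻ y in ball x r ∩ U, ENNReal.ofReal (dist x y) ^ (-α) ∂σ)
      ≤ ENNReal.ofReal c * ∫⁻ z, g z ∂volume := step1.trans step2
    _ = ENNReal.ofReal c * (ENNReal.ofReal c ^ α *
          ∫⁻ w in ball (0 : EuclideanSpace ℝ (Fin m)) R,
            ENNReal.ofReal ‖w‖ ^ (-α) ∂volume) := by rw [step3, step4]
    _ = ENNReal.ofReal (c ^ (α + 1)) *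
          ∫⁻ z in ball (0 : EuclideanSpace ℝ (Fin m)) (c * r),
            ENNReal.ofReal ‖z‖ ^ (-α) ∂volume := by
        rw [← mul_assoc, ← ENNReal.ofReal_rpow_of_pos hc]
        congr 1
        rw [ENNReal.rpow_add _ _ (ENNReal.ofReal_pos.mpr hc).ne' ENNReal.ofReal_ne_top,
          ENNReal.rpow_one, mul_comm]
end

section
/- Let d ≥ 3 be an integer, (X, dist) a metric space, σ a Borel measure on X, q ∈ (d − 1, ∞), and c > 0. Suppose there are finitely many Borel sets U₁, …, U_k ⊆ X with σ(X \ (U₁ ∪ … ∪ U_k)) = 0 and maps φ_i : X → ℝ^{d−1} (i = 1, …, k) with ‖φ_i(x) − φ_i(y)‖ ≤ c · dist(x, y) for all x, y ∈ X and φ_*(σ|_{U_i}) ≤ c · ℒ^{d−1} as measures on ℝ^{d−1}. Let l : X → ℝ be σ-measurable with ∫_X |l|^q dσ < ∞. Then lim_{r → 0⁺} sup_{x ∈ X} ∫_{B_r(x)} dist(x, y)^{2−d} |l(y)| dσ(y) = 0. -/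
open MeasureTheory Metric ENNReal Filter Topology

lemma measure_ball_le_aux {X : Type*} [MetricSpace X] [MeasurableSpace X] [BorelSpace X]
    (σ : Measure X) (n : ℕ) (c : ℝ) (hc : 0 < c) (k : ℕ) (U : Fin k → Set X)
    (hU : ∀ i, MeasurableSet (U i)) (hcover : σ (Set.univ \ ⋃ i, U i) = 0)
    (φ : Fin k → X → EuclideanSpace ℝ (Fin n))
    (hφlip : ∀ i x y, ‖φ i x - φ i y‖ ≤ c * dist x y)
    (hpush : ∀ i, Measure.map (φ i) (σ.restrict (U i)) ≤ ENNReal.ofReal c • volume)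
    (x : X) (ρ : ℝ) (hρ : 0 ≤ ρ) :
    σ (ball x ρ) ≤ ((k : ℝ≥0∞) * ENNReal.ofReal c * ENNReal.ofReal c ^ n *
        volume (ball (0 : EuclideanSpace ℝ (Fin n)) 1)) * ENNReal.ofReal ρ ^ n := by
  have hφm : ∀ i : Fin k, Measurable (φ i) := fun i => by
    have : LipschitzWith c.toNNReal (φ i) := by
      apply LipschitzWith.of_dist_le_mul
      intro a b
      rw [dist_eq_norm]
      simpa [Real.coe_toNNReal c hc.le] using hφlip i a b
    exact this.continuous.measurable
  have step : ∀ i : Fin k, σ (ball x ρ ∩ U i) ≤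
      ENNReal.ofReal c * (ENNReal.ofReal c ^ n *
        volume (ball (0 : EuclideanSpace ℝ (Fin n)) 1) * ENNReal.ofReal ρ ^ n) := by
    intro i
    have h1 : ball x ρ ⊆ (φ i) ⁻¹' (closedBall (φ i x) (c * ρ)) := by
      intro y hy
      simp only [Set.mem_preimage, mem_closedBall, dist_eq_norm]
      calc ‖φ i y - φ i x‖ = ‖φ i x - φ i y‖ := norm_sub_rev _ _
        _ ≤ c * dist x y := hφlip i x y
        _ ≤ c * ρ := by
            have := (mem_ball'.1 hy).le
            nlinarith [hc.le]
    have h2 : σ (ball x ρ ∩ U i) = σ.restrict (U i) (ball x ρ) := by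
      rw [Measure.restrict_apply measurableSet_ball]
    have h3 : σ.restrict (U i) (ball x ρ) ≤
        (Measure.map (φ i) (σ.restrict (U i))) (closedBall (φ i x) (c * ρ)) := by
      rw [Measure.map_apply (hφm i) measurableSet_closedBall]
      exact measure_mono h1
    have h4 : (Measure.map (φ i) (σ.restrict (U i))) (closedBall (φ i x) (c * ρ)) ≤
        ENNReal.ofReal c * volume (closedBall (φ i x) (c * ρ)) :=
      le_trans (hpush i _) (by simp [Measure.smul_apply])
    have h5 : volume (closedBall (φ i x) (c * ρ)) =
        ENNReal.ofReal ((c * ρ) ^ n) * volume (ball (0 : EuclideanSpace ℝ (Fin n)) 1) := by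
      rw [Measure.addHaar_closedBall _ _ (by positivity)]
      simp [finrank_euclideanSpace_fin]
    rw [h2]
    refine h3.trans (h4.trans ?_)
    rw [h5, mul_pow, ENNReal.ofReal_mul (by positivity), ENNReal.ofReal_pow hc.le,
      ENNReal.ofReal_pow hρ]
    ring_nf
    exact le_refl _
  calc σ (ball x ρ) ≤ σ (ball x ρ \ ⋃ i, U i) + σ (ball x ρ ∩ ⋃ i, U i) := by
        rw [← measure_diff_add_inter _ (MeasurableSet.iUnion hU)]
    _ ≤ 0 + σ (⋃ i, ball x ρ ∩ U i) := by
        gcongr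
        · exact le_trans (measure_mono (by intro y hy; exact ⟨Set.mem_univ y, hy.2⟩)) hcover.le
        · rw [Set.inter_iUnion]
    _ ≤ ∑ i : Fin k, σ (ball x ρ ∩ U i) := by
        rw [zero_add]; exact measure_iUnion_fintype_le _ _
    _ ≤ ∑ _i : Fin k, ENNReal.ofReal c * (ENNReal.ofReal c ^ n *
        volume (ball (0 : EuclideanSpace ℝ (Fin n)) 1) * ENNReal.ofReal ρ ^ n) :=
        Finset.sum_le_sum fun i _ => step i
    _ = _ := by
        simp [Finset.sum_const, mul_comm, mul_assoc, mul_left_comm]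


lemma kernel_lintegral_le {X : Type*} [MetricSpace X] [MeasurableSpace X] [BorelSpace X]
    (σ : Measure X) (C : ℝ≥0∞) (hC : C ≠ ⊤) (n : ℕ)
    (hball : ∀ (x : X) (ρ : ℝ), 0 ≤ ρ → σ (ball x ρ) ≤ C * ENNReal.ofReal ρ ^ n)
    (s : ℝ) (hs : 0 < s) (hsn : s < n) (x : X) (r : ℝ) (hr : 0 < r) :
    ∫⁻ y in ball x r, ENNReal.ofReal (dist x y) ^ (-s) ∂σ ≤
      (C * (2:ℝ≥0∞) ^ s * (1 - (2:ℝ≥0∞) ^ (s - (n:ℝ)))⁻¹) * ENNReal.ofReal r ^ ((n:ℝ) - s) := by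
  have hn1 : 1 ≤ n := by
    by_contra h
    push_neg at h
    interval_cases n
    · simp at hsn; linarith
  -- σ {x} = 0
  have hx0 : σ {x} = 0 := by
    have h1 : ∀ m : ℕ, σ {x} ≤ C * ENNReal.ofReal ((1 / (m + 1) : ℝ) ^ n) := by
      intro m
      have hm : (0:ℝ) < 1 / (m + 1) := by positivity
      calc σ {x} ≤ σ (ball x (1 / (m + 1))) := measure_mono (by simp only [Set.singleton_subset_iff, mem_ball, dist_self]; exact hm)
        _ ≤ C * ENNReal.ofReal (1 / (m + 1)) ^ n := hball x _ hm.le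
        _ = C * ENNReal.ofReal ((1 / (m + 1) : ℝ) ^ n) := by
            rw [ENNReal.ofReal_pow hm.le]
    have h2 : Tendsto (fun m : ℕ => C * ENNReal.ofReal ((1 / (m + 1) : ℝ) ^ n)) atTop (𝓝 0) := by
      have h3 : Tendsto (fun m : ℕ => ((1 / (m + 1) : ℝ)) ^ n) atTop (𝓝 0) := by
        have := tendsto_one_div_add_atTop_nhds_zero_nat (𝕜 := ℝ)
        simpa [zero_pow (by omega : n ≠ 0)] using this.pow n
      have h4 := (ENNReal.tendsto_ofReal h3)
      rw [ENNReal.ofReal_zero] at h4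
      simpa using ENNReal.Tendsto.const_mul h4 (Or.inr hC)
    exact le_antisymm (ge_of_tendsto' h2 h1) zero_le
  -- annuli
  set A : ℕ → Set X := fun j => ball x (r / 2 ^ j) ∩ {y | r / 2 ^ (j + 1) ≤ dist x y} with hA
  have hcov : ball x r ⊆ {x} ∪ ⋃ j, A j := by
    intro y hy
    rcases eq_or_ne y x with rfl | hne
    · exact Or.inl rfl
    have hd : 0 < dist x y := dist_pos.2 (Ne.symm hne)
    have hex : ∃ j : ℕ, r / 2 ^ (j + 1) ≤ dist x y := by
      obtain ⟨N, hN⟩ := pow_unbounded_of_one_lt (r / dist x y) (one_lt_two (α := ℝ))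
      refine ⟨N, ?_⟩
      rw [div_le_iff₀ (by positivity)]
      rw [div_lt_iff₀ hd] at hN
      have hpow : (2:ℝ) ^ N ≤ 2 ^ (N + 1) := by
        apply pow_le_pow_right₀ one_le_two (Nat.le_succ N)
      nlinarith [hd]
    right
    refine Set.mem_iUnion.2 ⟨Nat.find hex, ?_, Nat.find_spec hex⟩
    rcases Nat.eq_zero_or_pos (Nat.find hex) with h0 | hpos
    · rw [h0]
      simpa [dist_comm] using hy
    · obtain ⟨j, hj⟩ := Nat.exists_eq_succ_of_ne_zero hpos.ne'
      have := Nat.find_min hex (m := j) (by omega)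
      push_neg at this
      rw [hj]
      simp only [mem_ball, dist_comm y x]
      exact this
  set t := ENNReal.ofReal r with ht
  have ht0 : t ≠ 0 := by simp [ht, hr]
  have httop : t ≠ ⊤ := ENNReal.ofReal_ne_top
  set u : ℕ → ℝ≥0∞ := fun j => ENNReal.ofReal (r / 2 ^ j) with hu
  have hu0 : ∀ j, u j ≠ 0 := fun j => (ENNReal.ofReal_pos.2 (by positivity)).ne'
  have hutop : ∀ j, u j ≠ ⊤ := fun j => ENNReal.ofReal_ne_top
  have huform : ∀ j, u j = t * ((2:ℝ≥0∞)⁻¹) ^ j := by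
    intro j
    show ENNReal.ofReal (r / 2 ^ j) = ENNReal.ofReal r * ((2:ℝ≥0∞)⁻¹) ^ j
    rw [div_eq_mul_inv, ENNReal.ofReal_mul hr.le, ← inv_pow,
      ENNReal.ofReal_pow (by norm_num), ENNReal.ofReal_inv_of_pos (by norm_num)]
    norm_num
  have husucc : ∀ j, u (j + 1) = u j * 2⁻¹ := by
    intro j
    rw [huform, huform, pow_succ, mul_assoc]
  -- bound each annulus integral
  have hann : ∀ j : ℕ, ∫⁻ y in A j, ENNReal.ofReal (dist x y) ^ (-s) ∂σ ≤
      u (j+1) ^ (-s) * (C * u j ^ n) := by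
    intro j
    have hb : ∀ y ∈ A j, ENNReal.ofReal (dist x y) ^ (-s) ≤ u (j+1) ^ (-s) := by
      intro y hy
      rw [ENNReal.rpow_neg, ENNReal.rpow_neg]
      exact ENNReal.inv_le_inv.2 (ENNReal.rpow_le_rpow (ENNReal.ofReal_le_ofReal hy.2) hs.le)
    calc ∫⁻ y in A j, ENNReal.ofReal (dist x y) ^ (-s) ∂σ
        ≤ ∫⁻ _y in A j, u (j+1) ^ (-s) ∂σ := by
          refine setLIntegral_mono' ?_ hb
          exact measurableSet_ball.inter (measurableSet_le measurable_const
            ((continuous_const.dist continuous_id).measurable))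
      _ = u (j+1) ^ (-s) * σ (A j) := by rw [setLIntegral_const]
      _ ≤ u (j+1) ^ (-s) * (C * u j ^ n) := by
          gcongr
          exact le_trans (measure_mono Set.inter_subset_left)
            (hball x _ (by positivity))
  -- per-term formula
  have hterm : ∀ j : ℕ, u (j+1) ^ (-s) * (C * u j ^ n) =
      (C * (2:ℝ≥0∞) ^ s * t ^ ((n:ℝ) - s)) * ((2:ℝ≥0∞) ^ (s - (n:ℝ))) ^ j := by
    intro j
    have h2i : ((2:ℝ≥0∞)⁻¹) ≠ 0 := by norm_num
    have h2 : ((2:ℝ≥0∞)⁻¹) ^ (-s) = (2:ℝ≥0∞) ^ s := by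
      rw [ENNReal.inv_rpow, ← ENNReal.rpow_neg, neg_neg]
    have hcomb : u j ^ (-s) * u j ^ ((n:ℝ)) = u j ^ ((n:ℝ) - s) := by
      rw [← ENNReal.rpow_add _ _ (hu0 j) (hutop j)]
      congr 1; ring
    have h3 : (((2:ℝ≥0∞))⁻¹ ^ j) ^ ((n:ℝ) - s) = ((2:ℝ≥0∞) ^ (s - (n:ℝ))) ^ j := by
      rw [← ENNReal.rpow_natCast ((2:ℝ≥0∞)⁻¹) j, ← ENNReal.rpow_mul,
        ENNReal.inv_rpow, ← ENNReal.rpow_neg,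
        ← ENNReal.rpow_natCast ((2:ℝ≥0∞) ^ (s - (n:ℝ))) j, ← ENNReal.rpow_mul]
      congr 1; ring
    calc u (j+1) ^ (-s) * (C * u j ^ n)
        = (u j ^ (-s) * (2:ℝ≥0∞) ^ s) * (C * u j ^ ((n:ℝ))) := by
          rw [husucc j, ENNReal.mul_rpow_of_ne_zero (hu0 j) h2i, h2,
            ENNReal.rpow_natCast (u j) n]
      _ = C * (2:ℝ≥0∞) ^ s * (u j ^ (-s) * u j ^ ((n:ℝ))) := by ring
      _ = C * (2:ℝ≥0∞) ^ s * u j ^ ((n:ℝ) - s) := by rw [hcomb]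
      _ = C * (2:ℝ≥0∞) ^ s * (t ^ ((n:ℝ) - s) * ((2:ℝ≥0∞) ^ (s - (n:ℝ))) ^ j) := by
          rw [huform j, ENNReal.mul_rpow_of_ne_zero ht0 (pow_ne_zero j h2i), h3]
      _ = _ := by ring
  -- put together
  calc ∫⁻ y in ball x r, ENNReal.ofReal (dist x y) ^ (-s) ∂σ
      ≤ ∫⁻ y in {x} ∪ ⋃ j, A j, ENNReal.ofReal (dist x y) ^ (-s) ∂σ :=
        lintegral_mono_set hcov
    _ ≤ (∫⁻ y in {x}, ENNReal.ofReal (dist x y) ^ (-s) ∂σ) +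
        ∫⁻ y in ⋃ j, A j, ENNReal.ofReal (dist x y) ^ (-s) ∂σ := lintegral_union_le _ _ _
    _ ≤ 0 + ∑' j, ∫⁻ y in A j, ENNReal.ofReal (dist x y) ^ (-s) ∂σ := by
        gcongr
        · exact (setLIntegral_measure_zero _ _ hx0).le
        · exact lintegral_iUnion_le _ _
    _ ≤ ∑' j, u (j+1) ^ (-s) * (C * u j ^ n) := by
        rw [zero_add]; exact ENNReal.tsum_le_tsum hann
    _ = ∑' j, (C * (2:ℝ≥0∞) ^ s * t ^ ((n:ℝ) - s)) * ((2:ℝ≥0∞) ^ (s - (n:ℝ))) ^ j := by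
        exact tsum_congr hterm
    _ = (C * (2:ℝ≥0∞) ^ s * t ^ ((n:ℝ) - s)) * (1 - (2:ℝ≥0∞) ^ (s - (n:ℝ)))⁻¹ := by
        rw [ENNReal.tsum_mul_left, ENNReal.tsum_geometric]
    _ = (C * (2:ℝ≥0∞) ^ s * (1 - (2:ℝ≥0∞) ^ (s - (n:ℝ)))⁻¹) * t ^ ((n:ℝ) - s) := by ring



/-- **Uniform vanishing of the Riesz potential of a surface density.**
Let `σ` be a Borel measure on a metric space `X` carried (up to a null set) by finitely
many Borel sets `U i` admitting `c`-Lipschitz charts `φ i : X → ℝ^{d-1}` with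
`(φ i)_*(σ|_{U i}) ≤ c·ℒ^{d-1}`.  If `l ∈ L^q(σ)` for some `q ∈ (d-1, ∞)` and `d ≥ 3`,
then `lim_{r → 0⁺} sup_x ∫_{B_r(x)} dist(x,y)^{2-d} |l(y)| dσ(y) = 0`. -/
theorem riesz_potential_uniformly_vanishes
    {X : Type*} [MetricSpace X] [MeasurableSpace X] [BorelSpace X]
    (σ : Measure X) (d : ℕ) (hd : 3 ≤ d) (q : ℝ) (hq : (d : ℝ) - 1 < q)
    (c : ℝ) (hc : 0 < c) (k : ℕ)
    (U : Fin k → Set X) (hU : ∀ i, MeasurableSet (U i))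
    (hcover : σ (Set.univ \ ⋃ i, U i) = 0)
    (φ : Fin k → X → EuclideanSpace ℝ (Fin (d - 1)))
    (hφlip : ∀ (i : Fin k) (x y : X), ‖φ i x - φ i y‖ ≤ c * dist x y)
    (hpush : ∀ i : Fin k,
      Measure.map (φ i) (σ.restrict (U i)) ≤ ENNReal.ofReal c • volume)
    (l : X → ℝ) (hlmeas : Measurable l)
    (hl : ∫⁻ x, ENNReal.ofReal (|l x| ^ q) ∂σ < ⊤) :
    Tendsto
      (fun r : ℝ => ⨆ x : X, ∫⁻ y in ball x r,
        ENNReal.ofReal (dist x y) ^ ((2 : ℝ) - (d : ℝ)) * ENNReal.ofReal |l y| ∂σ)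
      (𝓝[>] (0 : ℝ)) (𝓝 0) := by
  classical
  have hd3 : (3:ℝ) ≤ (d:ℝ) := by exact_mod_cast hd
  have hncast : ((d - 1 : ℕ) : ℝ) = (d : ℝ) - 1 := by
    rw [Nat.cast_sub (by omega)]; norm_num
  have hq1 : 1 < q := by linarith
  set p : ℝ := q / (q - 1) with hp
  have hpq : p.HolderConjugate q := (Real.HolderConjugate.conjExponent hq1).symm
  have hp1 : 1 < p := hpq.lt
  have hp0 : 0 < p := by linarith
  set s : ℝ := ((d:ℝ) - 2) * p with hs_def
  have hs : 0 < s := mul_pos (by linarith) hp0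
  have hsn : s < ((d - 1 : ℕ):ℝ) := by
    rw [hncast, hs_def, hp,
      show ((d:ℝ)-2) * (q/(q-1)) = (((d:ℝ)-2)*q)/(q-1) by ring,
      div_lt_iff₀ (by linarith)]
    nlinarith
  set C : ℝ≥0∞ := (k : ℝ≥0∞) * ENNReal.ofReal c * ENNReal.ofReal c ^ (d - 1) *
      volume (ball (0 : EuclideanSpace ℝ (Fin (d - 1))) 1) with hCdef
  have hC : C ≠ ⊤ := by
    refine ENNReal.mul_ne_top (ENNReal.mul_ne_top (ENNReal.mul_ne_top ?_ ?_) ?_) ?_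
    · exact ENNReal.natCast_ne_top k
    · exact ENNReal.ofReal_ne_top
    · exact ENNReal.pow_ne_top ENNReal.ofReal_ne_top
    · exact measure_ball_lt_top.ne
  have hball : ∀ (x : X) (ρ : ℝ), 0 ≤ ρ → σ (ball x ρ) ≤ C * ENNReal.ofReal ρ ^ (d - 1) :=
    fun x ρ hρ => measure_ball_le_aux σ (d - 1) c hc k U hU hcover φ hφlip hpush x ρ hρ
  set C₂ : ℝ≥0∞ := C * (2:ℝ≥0∞) ^ s * (1 - (2:ℝ≥0∞) ^ (s - ((d - 1 : ℕ):ℝ)))⁻¹ with hC₂def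
  have hC₂ : C₂ ≠ ⊤ := by
    have hw : (2:ℝ≥0∞) ^ (s - ((d - 1 : ℕ):ℝ)) < 1 :=
      ENNReal.rpow_lt_one_of_one_lt_of_neg (by norm_num) (by rw [hncast]; linarith)
    refine ENNReal.mul_ne_top (ENNReal.mul_ne_top hC ?_) ?_
    · exact ENNReal.rpow_ne_top_of_nonneg hs.le (by norm_num)
    · rw [ENNReal.inv_ne_top]
      simp [tsub_eq_zero_iff_le, hw.not_ge]
  set L : ℝ≥0∞ := (∫⁻ x, ENNReal.ofReal (|l x| ^ q) ∂σ) ^ (1/q) with hL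
  have hLtop : L ≠ ⊤ := (ENNReal.rpow_lt_top_of_nonneg (by positivity) hl.ne).ne
  set M : ℝ≥0∞ := C₂ ^ (1/p) * L with hM
  have hM_ne : M ≠ ⊤ :=
    ENNReal.mul_ne_top (ENNReal.rpow_lt_top_of_nonneg (by positivity) hC₂).ne hLtop
  set α : ℝ := (((d - 1 : ℕ):ℝ) - s) / p with hα
  have hα0 : 0 < α := div_pos (by rw [hncast]; linarith) hp0
  have main : ∀ r : ℝ, 0 < r → (⨆ x : X, ∫⁻ y in ball x r,
      ENNReal.ofReal (dist x y) ^ ((2:ℝ) - (d:ℝ)) * ENNReal.ofReal |l y| ∂σ)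
      ≤ M * ENNReal.ofReal r ^ α := by
    intro r hr
    apply iSup_le
    intro x
    have hK : Measurable fun y => ENNReal.ofReal (dist x y) ^ ((2:ℝ) - (d:ℝ)) :=
      ENNReal.continuous_rpow_const.measurable.comp
        ((continuous_const.dist continuous_id).measurable.ennreal_ofReal)
    have hG : Measurable fun y : X => ENNReal.ofReal |l y| := (hlmeas.abs).ennreal_ofReal
    have hold := ENNReal.lintegral_mul_le_Lp_mul_Lq (σ.restrict (ball x r)) hpq
      hK.aemeasurable hG.aemeasurable
    simp only [Pi.mul_apply] at hold
    have hfac1 : (∫⁻ y in ball x r,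
        (ENNReal.ofReal (dist x y) ^ ((2:ℝ) - (d:ℝ))) ^ p ∂σ)
        ≤ C₂ * ENNReal.ofReal r ^ (((d - 1 : ℕ):ℝ) - s) := by
      have heq : ∀ y : X, (ENNReal.ofReal (dist x y) ^ ((2:ℝ) - (d:ℝ))) ^ p
          = ENNReal.ofReal (dist x y) ^ (-s) := by
        intro y
        rw [← ENNReal.rpow_mul]
        congr 1
        rw [hs_def]; ring
      simp_rw [heq]
      exact kernel_lintegral_le σ C hC (d - 1) hball s hs hsn x r hr
    have hfac2 : (∫⁻ y in ball x r, (ENNReal.ofReal |l y|) ^ q ∂σ) ≤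
        ∫⁻ x, ENNReal.ofReal (|l x| ^ q) ∂σ := by
      have heq : ∀ y : X, (ENNReal.ofReal |l y|) ^ q = ENNReal.ofReal (|l y| ^ q) := fun y =>
        ENNReal.ofReal_rpow_of_nonneg (abs_nonneg _) (by linarith)
      simp_rw [heq]
      exact setLIntegral_le_lintegral _ _
    calc ∫⁻ y in ball x r, ENNReal.ofReal (dist x y) ^ ((2:ℝ)-(d:ℝ)) * ENNReal.ofReal |l y| ∂σ
        ≤ (∫⁻ y in ball x r, (ENNReal.ofReal (dist x y) ^ ((2:ℝ)-(d:ℝ))) ^ p ∂σ) ^ (1/p) *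
          (∫⁻ y in ball x r, (ENNReal.ofReal |l y|) ^ q ∂σ) ^ (1/q) := hold
      _ ≤ (C₂ * ENNReal.ofReal r ^ (((d - 1 : ℕ):ℝ) - s)) ^ (1/p) * L := by
          rw [hL]
          exact mul_le_mul' (ENNReal.rpow_le_rpow hfac1 (by positivity))
            (ENNReal.rpow_le_rpow hfac2 (by positivity))
      _ = M * ENNReal.ofReal r ^ α := by
          rw [hM, ENNReal.mul_rpow_of_nonneg _ _ (by positivity), ← ENNReal.rpow_mul,
            mul_one_div, ← hα]
          ring
  have h2 : Tendsto (fun r : ℝ => M * ENNReal.ofReal r ^ α) (𝓝[>] (0:ℝ)) (𝓝 0) := by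
    have h4 : Tendsto (fun r : ℝ => ENNReal.ofReal r) (𝓝[>] (0:ℝ)) (𝓝 0) := by
      have h := ENNReal.continuous_ofReal.tendsto 0
      rw [ENNReal.ofReal_zero] at h
      exact h.mono_left nhdsWithin_le_nhds
    have h5 := (ENNReal.continuous_rpow_const (y := α)).tendsto 0
    rw [ENNReal.zero_rpow_of_pos hα0] at h5
    have h3 : Tendsto (fun r : ℝ => ENNReal.ofReal r ^ α) (𝓝[>] (0:ℝ)) (𝓝 0) := h5.comp h4
    have := ENNReal.Tendsto.const_mul h3 (Or.inr hM_ne)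
    simpa using this
  refine tendsto_of_tendsto_of_tendsto_of_le_of_le' tendsto_const_nhds h2 ?_ ?_
  · filter_upwards with r
    exact zero_le
  · filter_upwards [self_mem_nhdsWithin] with r hr
    exact main r hr
end

section
/- Let (X, d_X) and (Y, d_Y) be metric spaces carrying Borel measures μ and ν respectively, with 0 < ν(B_r(y)) < ∞ for all y ∈ Y, r > 0. Let F : X → Y and L ≥ 1 with d_Y(F(x), F(x′)) ≤ L · d_X(x, x′) for all x, x′ ∈ X, and let C ≥ 1 with μ(B_r(x)) ≥ C^{−1} · ν(B_{r/C}(F(x))) for all x ∈ X and r > 0. Assume ν satisfies the uniform local doubling property with constant C_D ≥ 1 and exponent κ ≥ 0. Let p : (0, 1] × X × X → [0, ∞) and q : (0, 1] × Y × Y → [0, ∞) satisfy, for all s ∈ (0, 1]: p(s, x, x′) ≤ C_U · μ(B_{√s}(x))^{−1} · exp(−d_X(x, x′)²/(5s)) for all x, x′ ∈ X, and q(s, y, y′) ≥ C_G^{−1} · ν(B_{√s}(y))^{−1} · exp(−d_Y(y, y′)²/(5L²s)) for all y, y′ ∈ Y, where C_U, C_G ≥ 1. Then for all s ∈ (0,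 1] and x, x′ ∈ X, p(s, x, x′) ≤ C_U · C · C_D · C^{κ} · e^{C_D} · C_G · q(s, F(x), F(x′)). -/
open MeasureTheory Metric ENNReal

/-- **Pointwise heat kernel domination through a quasi-isometry.**
Let `F : X → Y` be `L`-Lipschitz with `μ(B_r(x)) ≥ C⁻¹ ν(B_{r/C}(F x))`, where `ν` is
uniformly locally doubling with constant `C_D` and exponent `κ` and has positive finite
balls.  If `p` satisfies a Gaussian upper bound on `X` and `q` a matching Gaussian lower
bound on `Y`, then `p(s,x,x') ≤ C_U C C_D C^κ e^{C_D} C_G · q(s, F x, F x')` for all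
`s ∈ (0,1]`. -/
theorem kernel_domination_through_quasi_isometry
    {X Y : Type*} [MetricSpace X] [MetricSpace Y]
    [MeasurableSpace X] [BorelSpace X] [MeasurableSpace Y] [BorelSpace Y]
    (μ : Measure X) (ν : Measure Y)
    (hν : ∀ (y : Y) (r : ℝ), 0 < r → 0 < ν (ball y r) ∧ ν (ball y r) < ⊤)
    (F : X → Y) (L : ℝ) (hL : 1 ≤ L)
    (hF : ∀ x x' : X, dist (F x) (F x') ≤ L * dist x x')
    (C : ℝ) (hC : 1 ≤ C)
    (hvol : ∀ (x : X) (r : ℝ), 0 < r →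
      ENNReal.ofReal C⁻¹ * ν (ball (F x) (r / C)) ≤ μ (ball x r))
    (C_D κ : ℝ) (hCD : 1 ≤ C_D) (hκ : 0 ≤ κ)
    (hdoub : ∀ (y : Y) (s s' : ℝ), 0 < s' → s' ≤ s →
      ν (ball y s) ≤ ENNReal.ofReal (C_D * (s / s') ^ κ * Real.exp (C_D * s)) * ν (ball y s'))
    (C_U C_G : ℝ) (hCU : 1 ≤ C_U) (hCG : 1 ≤ C_G)
    (p : ℝ → X → X → ℝ) (q : ℝ → Y → Y → ℝ)
    (hp0 : ∀ (s : ℝ) (x x' : X), 0 ≤ p s x x')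
    (hq0 : ∀ (s : ℝ) (y y' : Y), 0 ≤ q s y y')
    (hp : ∀ (s : ℝ) (x x' : X), 0 < s → s ≤ 1 →
      p s x x' ≤ C_U * (μ (ball x (Real.sqrt s))).toReal⁻¹ *
        Real.exp (-(dist x x') ^ 2 / (5 * s)))
    (hq : ∀ (s : ℝ) (y y' : Y), 0 < s → s ≤ 1 →
      C_G⁻¹ * (ν (ball y (Real.sqrt s))).toReal⁻¹ *
        Real.exp (-(dist y y') ^ 2 / (5 * L ^ 2 * s)) ≤ q s y y') :
    ∀ (s : ℝ) (x x' : X), 0 < s → s ≤ 1 →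
      p s x x' ≤ C_U * C * C_D * C ^ κ * Real.exp C_D * C_G * q s (F x) (F x') := by

  intro s x x' hs hs1
  have hCpos : (0:ℝ) < C := lt_of_lt_of_le one_pos hC
  have hCDpos : (0:ℝ) < C_D := lt_of_lt_of_le one_pos hCD
  have hCUpos : (0:ℝ) < C_U := lt_of_lt_of_le one_pos hCU
  have hCGpos : (0:ℝ) < C_G := lt_of_lt_of_le one_pos hCG
  have hLpos : (0:ℝ) < L := lt_of_lt_of_le one_pos hL
  have hCκ : (0:ℝ) < C ^ κ := Real.rpow_pos_of_pos hCpos κ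
  have hsqrt : 0 < Real.sqrt s := Real.sqrt_pos.mpr hs
  have hsqrt1 : Real.sqrt s ≤ 1 := Real.sqrt_le_one.mpr hs1
  have hr' : 0 < Real.sqrt s / C := div_pos hsqrt hCpos
  have hqnn := hq0 s (F x) (F x')
  have hKpos : (0:ℝ) < C * C_D * C ^ κ * Real.exp C_D := by positivity
  by_cases hA : μ (ball x (Real.sqrt s)) = ⊤
  · have h0 : p s x x' ≤ 0 := by
      have := hp s x x' hs hs1
      rw [hA] at this
      simpa using this
    refine h0.trans ?_
    have : (0:ℝ) ≤ C_U * C * C_D * C ^ κ * Real.exp C_D * C_G := by positivity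
    exact mul_nonneg this hqnn
  · have hν' := hν (F x) (Real.sqrt s / C) hr'
    have hνs := hν (F x) (Real.sqrt s) hsqrt
    have hV'pos : 0 < (ν (ball (F x) (Real.sqrt s / C))).toReal :=
      ENNReal.toReal_pos hν'.1.ne' hν'.2.ne
    have hVpos : 0 < (ν (ball (F x) (Real.sqrt s))).toReal :=
      ENNReal.toReal_pos hνs.1.ne' hνs.2.ne
    have hvol' := hvol x (Real.sqrt s) hsqrt
    -- real version of the volume lower bound
    have hA1 : C⁻¹ * (ν (ball (F x) (Real.sqrt s / C))).toReal
        ≤ (μ (ball x (Real.sqrt s))).toReal := by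
      have := ENNReal.toReal_mono hA hvol'
      rwa [ENNReal.toReal_mul, ENNReal.toReal_ofReal (by positivity)] at this
    have hApos : 0 < (μ (ball x (Real.sqrt s))).toReal :=
      lt_of_lt_of_le (by positivity) hA1
    -- doubling at real level
    have hratio : Real.sqrt s / (Real.sqrt s / C) = C := by
      field_simp
    have hdoub' := hdoub (F x) (Real.sqrt s) (Real.sqrt s / C) hr'
      (div_le_self hsqrt.le hC)
    rw [hratio] at hdoub'
    have hdoubR : (ν (ball (F x) (Real.sqrt s))).toReal
        ≤ C_D * C ^ κ * Real.exp C_D * (ν (ball (F x) (Real.sqrt s / C))).toReal := by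
      have h1 : (ν (ball (F x) (Real.sqrt s))).toReal
          ≤ C_D * C ^ κ * Real.exp (C_D * Real.sqrt s) *
            (ν (ball (F x) (Real.sqrt s / C))).toReal := by
        have hfin : ENNReal.ofReal (C_D * C ^ κ * Real.exp (C_D * Real.sqrt s)) *
            ν (ball (F x) (Real.sqrt s / C)) ≠ ⊤ :=
          ENNReal.mul_ne_top ENNReal.ofReal_ne_top hν'.2.ne
        have := ENNReal.toReal_mono hfin hdoub'
        rwa [ENNReal.toReal_mul, ENNReal.toReal_ofReal (by positivity)] at this
      have hexp : Real.exp (C_D * Real.sqrt s) ≤ Real.exp C_D :=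
        Real.exp_le_exp.mpr (by nlinarith)
      have := mul_le_mul_of_nonneg_right
        (mul_le_mul_of_nonneg_left hexp (by positivity : (0:ℝ) ≤ C_D * C ^ κ))
        hV'pos.le
      calc (ν (ball (F x) (Real.sqrt s))).toReal ≤ _ := h1
        _ ≤ _ := by nlinarith
    -- key inverse estimate
    have hinv : (μ (ball x (Real.sqrt s))).toReal⁻¹
        ≤ C * C_D * C ^ κ * Real.exp C_D * (ν (ball (F x) (Real.sqrt s))).toReal⁻¹ := by
      have key : ∀ a b K : ℝ, 0 < a → 0 < b → 0 < K → b ≤ K * a → a⁻¹ ≤ K * b⁻¹ := by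
        intro a b K ha hb hK h
        calc a⁻¹ = b⁻¹ * b * a⁻¹ := by field_simp
          _ ≤ b⁻¹ * (K * a) * a⁻¹ :=
              mul_le_mul_of_nonneg_right
                (mul_le_mul_of_nonneg_left h (inv_nonneg.mpr hb.le))
                (inv_nonneg.mpr ha.le)
          _ = K * b⁻¹ := by field_simp
      have hV'A : (ν (ball (F x) (Real.sqrt s / C))).toReal
          ≤ C * (μ (ball x (Real.sqrt s))).toReal := by
        nlinarith [mul_le_mul_of_nonneg_left hA1 hCpos.le, mul_inv_cancel₀ hCpos.ne']
      have h2 : (μ (ball x (Real.sqrt s))).toReal⁻¹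
          ≤ C * (ν (ball (F x) (Real.sqrt s / C))).toReal⁻¹ :=
        key _ _ _ hApos hV'pos hCpos hV'A
      have h3 : (ν (ball (F x) (Real.sqrt s / C))).toReal⁻¹
          ≤ C_D * C ^ κ * Real.exp C_D * (ν (ball (F x) (Real.sqrt s))).toReal⁻¹ :=
        key _ _ _ hV'pos hVpos (by positivity) hdoubR
      calc (μ (ball x (Real.sqrt s))).toReal⁻¹ ≤ _ := h2
        _ ≤ C * (C_D * C ^ κ * Real.exp C_D * (ν (ball (F x) (Real.sqrt s))).toReal⁻¹) :=
            mul_le_mul_of_nonneg_left h3 hCpos.le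
        _ = _ := by ring
    -- exponential comparison
    have hexpcmp : Real.exp (-(dist x x') ^ 2 / (5 * s))
        ≤ Real.exp (-(dist (F x) (F x')) ^ 2 / (5 * L ^ 2 * s)) := by
      apply Real.exp_le_exp.mpr
      rw [div_le_div_iff₀ (by positivity) (by positivity)]
      have hd := hF x x'
      have hd2 : (dist (F x) (F x')) ^ 2 ≤ L ^ 2 * (dist x x') ^ 2 := by
        nlinarith [dist_nonneg (x := F x) (y := F x'), dist_nonneg (x := x) (y := x')]
      linarith [mul_le_mul_of_nonneg_right hd2 (by positivity : (0:ℝ) ≤ 5 * s)]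
    -- lower bound on q
    have hq' := hq s (F x) (F x') hs hs1
    have hqge : (ν (ball (F x) (Real.sqrt s))).toReal⁻¹ *
        Real.exp (-(dist (F x) (F x')) ^ 2 / (5 * L ^ 2 * s)) ≤ C_G * q s (F x) (F x') := by
      have := mul_le_mul_of_nonneg_left hq' hCGpos.le
      calc (ν (ball (F x) (Real.sqrt s))).toReal⁻¹ *
            Real.exp (-(dist (F x) (F x')) ^ 2 / (5 * L ^ 2 * s))
          = C_G * (C_G⁻¹ * (ν (ball (F x) (Real.sqrt s))).toReal⁻¹ *
            Real.exp (-(dist (F x) (F x')) ^ 2 / (5 * L ^ 2 * s))) := by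
            field_simp
        _ ≤ C_G * q s (F x) (F x') := this
    -- assemble
    have hstep1 : p s x x' ≤ C_U * (μ (ball x (Real.sqrt s))).toReal⁻¹ *
        Real.exp (-(dist (F x) (F x')) ^ 2 / (5 * L ^ 2 * s)) := by
      calc p s x x' ≤ _ := hp s x x' hs hs1
        _ ≤ _ := mul_le_mul_of_nonneg_left hexpcmp (by positivity)
    calc p s x x' ≤ _ := hstep1
      _ ≤ C_U * (C * C_D * C ^ κ * Real.exp C_D *
            (ν (ball (F x) (Real.sqrt s))).toReal⁻¹) *
          Real.exp (-(dist (F x) (F x')) ^ 2 / (5 * L ^ 2 * s)) := by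
          apply mul_le_mul_of_nonneg_right
            (mul_le_mul_of_nonneg_left hinv hCUpos.le) (Real.exp_nonneg _)
      _ = C_U * (C * C_D * C ^ κ * Real.exp C_D) *
          ((ν (ball (F x) (Real.sqrt s))).toReal⁻¹ *
            Real.exp (-(dist (F x) (F x')) ^ 2 / (5 * L ^ 2 * s))) := by ring
      _ ≤ C_U * (C * C_D * C ^ κ * Real.exp C_D) * (C_G * q s (F x) (F x')) := by
          apply mul_le_mul_of_nonneg_left hqge (by positivity)
      _ = C_U * C * C_D * C ^ κ * Real.exp C_D * C_G * q s (F x) (F x') := by ring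
end
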